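/- arXiv:1410.2996 — 10 statements merged into one kernel-verified Lean document; each statement's English description precedes it below -/
import Mathlib

section
/- For every n < ω, every Hausdorff topological group belonging to the class SSGP(n) also belongs to the class SSGP(n+1); consequently SSGP(n) ⊆ SSGP(m) whenever n < m < ω. -/
/-!
The empty family of subgroups fits inside every neighbourhood of `1`, and in a T₁ group the
closed subgroup it generates is `{1}`. Since `G ⧸ {1}` is isomorphic to `G` as a topological
group, `SSGP n G` gives `SSGP (n + 1) G`. The only real work is the invariance of `SSGP n` under
topological group isomorphisms, by induction on `n`, transporting each family of subgroups and
the quotient along the isomorphism.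
-/

universe u v

/-- The classes SSGP(n) of Hausdorff topological groups: `SSGP 0 G` iff `G` is
trivial; `SSGP (n+1) G` iff for every neighborhood `U` of `1` there is a family
`𝓗` of subgroups of `G`, each contained in `U`, such that the closure `N` of the
subgroup generated by `⋃ 𝓗` is normal and `G ⧸ N` (with the quotient topology)
belongs to `SSGP n`. -/
def SSGP : ℕ → ∀ (G : Type u) [Group G] [TopologicalSpace G] [IsTopologicalGroup G], Prop
  | 0, G, _, _, _ => Subsingleton G
  | n + 1, G, _, _, _ =>
      ∀ U ∈ nhds (1 : G), ∃ 𝓗 : Set (Subgroup G),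
        (∀ H ∈ 𝓗, (H : Set G) ⊆ U) ∧
        ∃ hN : (Subgroup.closure (⋃ H ∈ 𝓗, (H : Set G))).topologicalClosure.Normal,
          haveI := hN
          SSGP n (G ⧸ (Subgroup.closure (⋃ H ∈ 𝓗, (H : Set G))).topologicalClosure)

open Topology

section

variable {G H : Type*} [Group G] [TopologicalSpace G] [IsTopologicalGroup G]
  [Group H] [TopologicalSpace H] [IsTopologicalGroup H]

theorem Subgroup.topologicalClosure_bot [T1Space G] : (⊥ : Subgroup G).topologicalClosure = ⊥ :=
  SetLike.ext' (by simp)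

theorem ContinuousMulEquiv.map_topologicalClosure (e : G ≃ₜ* H) (K : Subgroup G) :
    K.topologicalClosure.map (e : G →* H) = (K.map (e : G →* H)).topologicalClosure :=
  SetLike.ext' (e.toHomeomorph.image_closure K)

theorem ContinuousMulEquiv.map_closure_biUnion (e : G ≃ₜ* H) (𝓗 : Set (Subgroup G)) :
    (Subgroup.closure (⋃ K ∈ 𝓗, (K : Set G))).topologicalClosure.map (e : G →* H) =
      (Subgroup.closure
        (⋃ K ∈ Subgroup.map (e : G →* H) '' 𝓗, (K : Set H))).topologicalClosure := by
  rw [e.map_topologicalClosure, MonoidHom.map_closure, Set.biUnion_image, Set.image_iUnion₂]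
  rfl

def ContinuousMulEquiv.quotientCongr (e : G ≃ₜ* H) (N : Subgroup G) (M : Subgroup H)
    [N.Normal] [M.Normal] (he : N.map (e : G →* H) = M) : G ⧸ N ≃ₜ* H ⧸ M where
  toMulEquiv := QuotientGroup.congr N M e.toMulEquiv he
  continuous_toFun := (QuotientGroup.isQuotientMap_mk N).continuous_iff.mpr <|
    QuotientGroup.continuous_mk.comp e.continuous
  continuous_invFun := (QuotientGroup.isQuotientMap_mk M).continuous_iff.mpr <|
    QuotientGroup.continuous_mk.comp e.symm.continuous

def QuotientGroup.quotientBotContinuousMulEquiv : G ⧸ (⊥ : Subgroup G) ≃ₜ* G where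
  toMulEquiv := QuotientGroup.quotientBot
  continuous_toFun := (QuotientGroup.isQuotientMap_mk ⊥).continuous_iff.mpr continuous_id
  continuous_invFun := QuotientGroup.continuous_mk

end

section SSGP

variable {G H : Type u} [Group G] [TopologicalSpace G] [IsTopologicalGroup G]
  [Group H] [TopologicalSpace H] [IsTopologicalGroup H]

/-- Bundling the normality proof with the quotient lets `rw` move along equalities of subgroups,
which the instance hidden in the definition of `SSGP` prevents. -/
def Subgroup.HasSSGPQuotient (N : Subgroup G) (n : ℕ) : Prop :=
  ∃ _ : N.Normal, SSGP n (G ⧸ N)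

theorem SSGP.succ_iff {n : ℕ} :
    SSGP (n + 1) G ↔ ∀ U ∈ 𝓝 (1 : G), ∃ 𝓗 : Set (Subgroup G),
      (∀ K ∈ 𝓗, (K : Set G) ⊆ U) ∧
      (Subgroup.closure (⋃ K ∈ 𝓗, (K : Set G))).topologicalClosure.HasSSGPQuotient n :=
  Iff.rfl

theorem SSGP.of_continuousMulEquiv {n : ℕ} (e : G ≃ₜ* H) (hG : SSGP n G) : SSGP n H := by
  induction n generalizing G H with
  | zero =>
    have : Subsingleton G := hG
    exact e.symm.toEquiv.subsingleton
  | succ n ih =>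
    rw [SSGP.succ_iff] at hG ⊢
    intro U hU
    obtain ⟨𝓗, h𝓗U, hN, hquot⟩ :=
      hG (e ⁻¹' U) (e.continuous.continuousAt.preimage_mem_nhds (by simpa using hU))
    refine ⟨Subgroup.map (e : G →* H) '' 𝓗, ?_, ?_⟩
    · rintro _ ⟨K, hK, rfl⟩ _ ⟨x, hx, rfl⟩
      exact h𝓗U K hK hx
    · rw [← e.map_closure_biUnion]
      have := hN.map (e : G →* H) e.surjective
      exact ⟨this, ih (e.quotientCongr _ _ rfl) hquot⟩

theorem SSGP.succ [T1Space G] {n : ℕ} (hG : SSGP n G) : SSGP (n + 1) G := by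
  rw [SSGP.succ_iff]
  intro U _
  refine ⟨∅, by simp, ?_⟩
  simp only [Set.mem_empty_iff_false, Set.iUnion_of_empty, Set.iUnion_empty,
    Subgroup.closure_empty, Subgroup.topologicalClosure_bot]
  exact ⟨inferInstance,
    hG.of_continuousMulEquiv QuotientGroup.quotientBotContinuousMulEquiv.symm⟩

theorem SSGP.mono [T1Space G] {n m : ℕ} (hnm : n ≤ m) (hG : SSGP n G) : SSGP m G := by
  induction m, hnm using Nat.le_induction with
  | base => exact hG
  | succ m _ ih => exact ih.succ

end SSGP

/-- For every `n < ω`, `SSGP n ⊆ SSGP (n+1)`; consequently `SSGP n ⊆ SSGP m`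
whenever `n < m < ω`. -/
theorem ssgp_n_subset_ssgp_succ_and_mono :
    (∀ (n : ℕ) (G : Type u) [Group G] [TopologicalSpace G] [IsTopologicalGroup G] [T2Space G],
      SSGP n G → SSGP (n + 1) G) ∧
    (∀ n m : ℕ, n < m →
      ∀ (G : Type u) [Group G] [TopologicalSpace G] [IsTopologicalGroup G] [T2Space G],
        SSGP n G → SSGP m G) := by
  exact ⟨fun _ _ _ _ _ _ => SSGP.succ, fun _ _ hnm _ _ _ _ _ => SSGP.mono hnm.le⟩
end

section
/- Let G be a nontrivial Hausdorff topological group for which some neighborhood U of the identity 1_G contains no subgroup of G other than the trivial subgroup {1_G}. Then there is no n < ω such that G ∈ SSGP(n). -/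
universe u v

/-!
A subgroup inside the subgroup-free neighborhood `U` is trivial, so every family `𝓗` offered
by the definition of SSGP(n+1) consists of trivial subgroups, and `N` is the closure of `{1}`.
In a topological group that closure lies in every neighborhood of `1` (groups are R₀), hence in
`U`, so `N` is trivial as well. Thus `G ⧸ N` is a copy of `G` and inherits both nontriviality
and a subgroup-free neighborhood; induction on `n` ends at SSGP(0), which forces triviality.
-/

open Topology

def NoSmallSubgroups (G : Type*) [Group G] [TopologicalSpace G] : Prop :=
  ∃ U ∈ 𝓝 (1 : G), ∀ H : Subgroup G, (H : Set G) ⊆ U → H = ⊥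

theorem QuotientGroup.mk'_bijective_of_eq_bot {G : Type*} [Group G] {N : Subgroup G} [N.Normal]
    (hN : N = ⊥) : Function.Bijective (QuotientGroup.mk' N) :=
  ⟨(MonoidHom.ker_eq_bot_iff _).mp ((QuotientGroup.ker_mk' N).trans hN),
    QuotientGroup.mk'_surjective N⟩

section

variable {G : Type*} [Group G] [TopologicalSpace G]

theorem Subgroup.coe_topologicalClosure_bot_subset_of_mem_nhds [IsTopologicalGroup G]
    {U : Set G} (hU : U ∈ 𝓝 1) : ((⊥ : Subgroup G).topologicalClosure : Set G) ⊆ U := by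
  rw [Subgroup.coe_topologicalClosure_bot, R0Space.closure_singleton]
  exact fun _ hx ↦ Filter.mem_ker.mp hx U hU

theorem topologicalClosure_closure_iUnion_eq_bot_of_subset [IsTopologicalGroup G]
    {U : Set G} (hU : U ∈ 𝓝 1) (hsmall : ∀ H : Subgroup G, (H : Set G) ⊆ U → H = ⊥)
    {𝓗 : Set (Subgroup G)} (h𝓗 : ∀ H ∈ 𝓗, (H : Set G) ⊆ U) :
    (Subgroup.closure (⋃ H ∈ 𝓗, (H : Set G))).topologicalClosure = ⊥ := by
  have hclosure : Subgroup.closure (⋃ H ∈ 𝓗, (H : Set G)) = ⊥ :=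
    le_bot_iff.mp <| (Subgroup.closure_le _).mpr <|
      Set.iUnion₂_subset fun H hH ↦ by rw [hsmall H (h𝓗 H hH)]
  apply hsmall
  rw [hclosure]
  exact Subgroup.coe_topologicalClosure_bot_subset_of_mem_nhds hU

theorem NoSmallSubgroups.of_bijective_of_isOpenMap {K : Type*} [Group K] [TopologicalSpace K]
    {f : G →* K} (hf : Function.Bijective f) (hfo : IsOpenMap f) (hG : NoSmallSubgroups G) :
    NoSmallSubgroups K := by
  obtain ⟨U, hU, hsmall⟩ := hG
  refine ⟨f '' U, by simpa using hfo.image_mem_nhds hU, fun H hH ↦ ?_⟩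
  have hcomap : H.comap f = ⊥ := hsmall _ fun x hx ↦ by
    obtain ⟨u, hu, hux⟩ := hH hx
    rwa [← hf.1 hux]
  rw [← Subgroup.map_comap_eq_self_of_surjective hf.2 H, hcomap, Subgroup.map_bot]

theorem NoSmallSubgroups.not_ssgp (n : ℕ) :
    ∀ (G : Type u) [Group G] [TopologicalSpace G] [IsTopologicalGroup G] [Nontrivial G],
      NoSmallSubgroups G → ¬ SSGP n G := by
  induction n with
  | zero => exact fun G _ _ _ _ _ ↦ not_subsingleton G
  | succ n ih =>
    intro G _ _ _ _ ⟨U, hU, hsmall⟩ hG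
    obtain ⟨𝓗, h𝓗, _, hquot⟩ := hG U hU
    have hN := topologicalClosure_closure_iUnion_eq_bot_of_subset hU hsmall h𝓗
    have hbij := QuotientGroup.mk'_bijective_of_eq_bot hN
    have : Nontrivial (G ⧸ _) := hbij.1.nontrivial
    exact ih _ (.of_bijective_of_isOpenMap hbij QuotientGroup.isOpenMap_coe ⟨U, hU, hsmall⟩) hquot

end

theorem not_ssgp_of_small_nhd_general (G : Type u) [Group G] [TopologicalSpace G]
    [IsTopologicalGroup G] [Nontrivial G]
    (U : Set G) (hU : U ∈ nhds (1 : G))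
    (hsmall : ∀ H : Subgroup G, (H : Set G) ⊆ U → H = ⊥) :
    ¬ ∃ n : ℕ, SSGP n G := by
  rintro ⟨n, hn⟩
  exact NoSmallSubgroups.not_ssgp n G ⟨U, hU, hsmall⟩ hn

/-- If some neighborhood `U` of the identity of a nontrivial Hausdorff
topological group `G` contains no subgroup other than the trivial one, then
`G ∈ SSGP(n)` for no `n < ω`. -/
theorem not_ssgp_of_small_nhd (G : Type u) [Group G] [TopologicalSpace G]
    [IsTopologicalGroup G] [T2Space G] [Nontrivial G]
    (U : Set G) (hU : U ∈ nhds (1 : G))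
    (hsmall : ∀ H : Subgroup G, (H : Set G) ⊆ U → H = ⊥) :
    ¬ ∃ n : ℕ, SSGP n G :=
  not_ssgp_of_small_nhd_general G U hU hsmall
end

section
/- The additive group ℤ of integers does not admit an SSGP(n) topology for any n < ω; that is, there is no n < ω and no Hausdorff group topology 𝒯 on ℤ such that (ℤ,𝒯) ∈ SSGP(n). -/
universe u v

/-- The classes SSGP(n) of Hausdorff topological groups, additive version:
`AddSSGP 0 G` iff `G` is trivial; `AddSSGP (n+1) G` iff for every neighborhood
`U` of `0` there is a family `𝓗` of subgroups of `G`, each contained in `U`,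
such that the closure `N` of the subgroup generated by `⋃ 𝓗` is normal and
`G ⧸ N` (with the quotient topology) belongs to `AddSSGP n`. -/
def AddSSGP : ℕ → ∀ (G : Type u) [AddGroup G] [TopologicalSpace G] [IsTopologicalAddGroup G], Prop
  | 0, G, _, _, _ => Subsingleton G
  | n + 1, G, _, _, _ =>
      ∀ U ∈ nhds (0 : G), ∃ 𝓗 : Set (AddSubgroup G),
        (∀ H ∈ 𝓗, (H : Set G) ⊆ U) ∧
        ∃ hN : (AddSubgroup.closure (⋃ H ∈ 𝓗, (H : Set G))).topologicalClosure.Normal,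
          haveI := hN
          AddSSGP n (G ⧸ (AddSubgroup.closure (⋃ H ∈ 𝓗, (H : Set G))).topologicalClosure)

/-!
Every nontrivial subgroup of `ℤ` has finite index, and this property passes to quotients.
By induction on `n`, a Hausdorff group with this property that is SSGP(n) is trivial: for
SSGP(n+1) the quotients in the definition are trivial by induction, so small subgroups
topologically generate the whole group. If `a ≠ 0`, a closed neighbourhood of `0` missing `a`
contains a nontrivial subgroup, whose closure `K` is closed of finite index, hence open; but
the subgroups contained in `K` only generate a subgroup of `K`, which misses `a`.
-/

/-- The small subgroup generating property of Comfort and Gould: `AddSSGP 1` without the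
normality witness. -/
def SmallSubgroupGenerating (G : Type u) [AddGroup G] [TopologicalSpace G]
    [IsTopologicalAddGroup G] : Prop :=
  ∀ U ∈ nhds (0 : G), ∃ 𝓗 : Set (AddSubgroup G), (∀ H ∈ 𝓗, (H : Set G) ⊆ U) ∧
    (AddSubgroup.closure (⋃ H ∈ 𝓗, (H : Set G))).topologicalClosure = ⊤

theorem Int.finiteIndex_of_ne_bot (K : AddSubgroup ℤ) (hK : K ≠ ⊥) : K.FiniteIndex := by
  obtain ⟨a, rfl⟩ := Int.subgroup_cyclic K
  rw [← AddSubgroup.zmultiples_eq_closure] at hK ⊢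
  have ha : a ≠ 0 := by rintro rfl; exact hK AddSubgroup.zmultiples_zero_eq_bot
  exact AddSubgroup.finiteIndex_iff.mpr (by simpa [Int.index_zmultiples] using ha)

section

variable {G : Type u} [AddGroup G]

theorem QuotientAddGroup.finiteIndex_of_ne_bot
    (hG : ∀ K : AddSubgroup G, K ≠ ⊥ → K.FiniteIndex) (N : AddSubgroup G) [N.Normal]
    (K : AddSubgroup (G ⧸ N)) (hK : K ≠ ⊥) : K.FiniteIndex := by
  have hmk := QuotientAddGroup.mk'_surjective N
  have hcomap : K.comap (QuotientAddGroup.mk' N) ≠ ⊥ := fun h ↦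
    hK (by rw [← AddSubgroup.map_comap_eq_self_of_surjective hmk K, h, AddSubgroup.map_bot])
  have := hG _ hcomap
  rw [AddSubgroup.finiteIndex_iff, ← AddSubgroup.index_comap_of_surjective K hmk]
  exact AddSubgroup.FiniteIndex.index_ne_zero

variable [TopologicalSpace G] [IsTopologicalAddGroup G]

theorem AddSubgroup.topologicalClosure_closure_iUnion_le {𝓗 : Set (AddSubgroup G)}
    {K : AddSubgroup G} (hK : IsClosed (K : Set G)) (h𝓗 : ∀ H ∈ 𝓗, (H : Set G) ⊆ K) :
    (AddSubgroup.closure (⋃ H ∈ 𝓗, (H : Set G))).topologicalClosure ≤ K :=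
  AddSubgroup.topologicalClosure_minimal _
    (AddSubgroup.closure_le K |>.mpr (Set.iUnion₂_subset h𝓗)) hK

theorem AddSSGP.smallSubgroupGenerating_of_succ {n : ℕ} (h : AddSSGP (n + 1) G)
    (hq : ∀ (N : AddSubgroup G) [N.Normal], IsClosed (N : Set G) →
      AddSSGP n (G ⧸ N) → Subsingleton (G ⧸ N)) :
    SmallSubgroupGenerating G := by
  intro U hU
  obtain ⟨𝓗, h𝓗U, hN, hquot⟩ := h U hU
  refine ⟨𝓗, h𝓗U, eq_top_iff.mpr fun g _ ↦ ?_⟩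
  have := hq _ (AddSubgroup.isClosed_topologicalClosure _) hquot
  exact (QuotientAddGroup.eq_zero_iff g).mp (Subsingleton.elim _ _)

variable [T2Space G]

theorem SmallSubgroupGenerating.exists_ne_bot_subset [Nontrivial G]
    (hG : SmallSubgroupGenerating G) {U : Set G} (hU : U ∈ nhds 0) :
    ∃ H : AddSubgroup G, H ≠ ⊥ ∧ (H : Set G) ⊆ U := by
  obtain ⟨𝓗, h𝓗U, hN⟩ := hG U hU
  by_contra! h
  have h𝓗 : ∀ H ∈ 𝓗, (H : Set G) ⊆ (⊥ : AddSubgroup G) := fun H hH ↦ by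
    obtain rfl : H = ⊥ := by_contra fun hne ↦ h H hne (h𝓗U H hH)
    rfl
  have hbot : IsClosed ((⊥ : AddSubgroup G) : Set G) := by
    rw [AddSubgroup.coe_bot]; exact isClosed_singleton
  exact top_ne_bot (le_bot_iff.mp (hN ▸ AddSubgroup.topologicalClosure_closure_iUnion_le hbot h𝓗))

theorem SmallSubgroupGenerating.subsingleton (hG : SmallSubgroupGenerating G)
    (hfi : ∀ K : AddSubgroup G, K ≠ ⊥ → K.FiniteIndex) : Subsingleton G := by
  by_contra hG'
  rw [not_subsingleton_iff_nontrivial] at hG'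
  obtain ⟨a, ha⟩ := exists_ne (0 : G)
  obtain ⟨t, ht, htc, hta⟩ :=
    exists_mem_nhds_isClosed_subset (isOpen_compl_singleton.mem_nhds ha.symm)
  obtain ⟨H, hH, hHt⟩ := hG.exists_ne_bot_subset ht
  set K := H.topologicalClosure
  have hKc : IsClosed (K : Set G) := H.isClosed_topologicalClosure
  have hKt : (K : Set G) ⊆ t := by
    rw [AddSubgroup.topologicalClosure_coe]; exact closure_minimal hHt htc
  have := hfi K (ne_bot_of_le_ne_bot hH H.le_topologicalClosure)
  have hKo : IsOpen (K : Set G) := K.isOpen_of_isClosed_of_finiteIndex hKc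
  obtain ⟨𝓗, h𝓗K, hN⟩ := hG K (hKo.mem_nhds K.zero_mem)
  have haK : a ∈ K :=
    AddSubgroup.topologicalClosure_closure_iUnion_le hKc h𝓗K (hN ▸ AddSubgroup.mem_top a)
  exact hta (hKt haK) rfl

end

theorem AddSSGP.subsingleton (n : ℕ) : ∀ (G : Type u) [AddGroup G] [TopologicalSpace G]
    [IsTopologicalAddGroup G] [T2Space G], (∀ K : AddSubgroup G, K ≠ ⊥ → K.FiniteIndex) →
    AddSSGP n G → Subsingleton G := by
  induction n with
  | zero => exact fun _ _ _ _ _ _ h ↦ h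
  | succ n ih =>
    intro G _ _ _ _ hfi h
    refine (h.smallSubgroupGenerating_of_succ fun N _ hN hq ↦ ?_).subsingleton hfi
    have : IsClosed (N : Set G) := hN
    exact ih (G ⧸ N) (QuotientAddGroup.finiteIndex_of_ne_bot hfi N) hq

/-- The additive group `ℤ` admits no SSGP(n) topology for any `n < ω`. -/
theorem int_not_exists_ssgp_topology :
    ¬ ∃ (n : ℕ) (t : TopologicalSpace ℤ),
        haveI := t
        ∃ tg : IsTopologicalAddGroup ℤ,
          haveI := tg
          T2Space ℤ ∧ AddSSGP n ℤ := by
  rintro ⟨n, t, tg, ht2, hssgp⟩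
  have := AddSSGP.subsingleton n ℤ Int.finiteIndex_of_ne_bot hssgp
  exact zero_ne_one (Subsingleton.elim (0 : ℤ) 1)
end

section
/- Let G and B be Hausdorff topological groups with G ∈ SSGP(n), and let π : G → B be a continuous surjective group homomorphism. Then B ∈ SSGP(n). In particular, if K is a closed normal subgroup of G ∈ SSGP(n), then the quotient group G/K (with the quotient topology) belongs to SSGP(n). -/
universe u v

/-!
A family `𝓗` of subgroups witnessing the SSGP condition of `G` for the neighbourhood `π ⁻¹' U`
is pushed forward to the family `π '' 𝓗`, whose members lie in `U`. If `N` is the closed normal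
subgroup of `G` generated by `𝓗`, the closed subgroup `A` generated by `π '' 𝓗` is also the
closure of `π N`, hence normal because `π` is surjective. Then `π` induces a continuous
surjection `G ⧸ N → B ⧸ A`, and induction on `n` applies.
-/

open Set

namespace Subgroup

variable {G B : Type*} [Group G] [Group B]

theorem map_closure_biUnion (f : G →* B) (𝓗 : Set (Subgroup G)) :
    (closure (⋃ H ∈ 𝓗, (H : Set G))).map f = closure (⋃ K ∈ map f '' 𝓗, (K : Set B)) := by
  rw [MonoidHom.map_closure, image_iUnion₂, biUnion_image]
  simp only [coe_map]

variable [TopologicalSpace G] [IsTopologicalGroup G] [TopologicalSpace B] [IsTopologicalGroup B]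
  {f : G →* B}

theorem map_topologicalClosure_le (hf : Continuous f) (H : Subgroup G) :
    H.topologicalClosure.map f ≤ (H.map f).topologicalClosure :=
  image_closure_subset_closure_image hf

theorem topologicalClosure_map_topologicalClosure (hf : Continuous f) (H : Subgroup G) :
    (H.topologicalClosure.map f).topologicalClosure = (H.map f).topologicalClosure :=
  le_antisymm
    (topologicalClosure_minimal _ (map_topologicalClosure_le hf H) isClosed_closure)
    (topologicalClosure_mono (map_mono H.le_topologicalClosure))

theorem normal_topologicalClosure_map (hf : Continuous f) (hfs : Function.Surjective f)
    {H : Subgroup G} (hH : H.topologicalClosure.Normal) : (H.map f).topologicalClosure.Normal := by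
  rw [← topologicalClosure_map_topologicalClosure hf]
  have := hH.map f hfs
  exact is_normal_topologicalClosure _

end Subgroup

theorem QuotientGroup.continuous_map {G B : Type*} [Group G] [TopologicalSpace G] [Group B]
    [TopologicalSpace B] (N : Subgroup G) [N.Normal] (M : Subgroup B) [M.Normal] {f : G →* B}
    (hf : Continuous f) (h : N ≤ M.comap f) : Continuous (map N M f h) :=
  (isQuotientMap_mk N).continuous_iff.2 (continuous_mk.comp hf)

/- `rw` cannot perform this transport in place: the `IsTopologicalGroup` instance of the
quotient depends on the normality proof, and the rewrite motive is then ill-typed. -/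
theorem SSGP.exists_normal_quotient_of_eq {n : ℕ} {B : Type v} [Group B] [TopologicalSpace B]
    [IsTopologicalGroup B] {A A' : Subgroup B} (h : A = A')
    (hA : ∃ hN : A.Normal, haveI := hN; SSGP n (B ⧸ A)) :
    ∃ hN : A'.Normal, haveI := hN; SSGP n (B ⧸ A') := by
  subst h
  exact hA

theorem SSGP.of_continuous_surjective (n : ℕ) {G : Type u} {B : Type v} [Group G]
    [TopologicalSpace G] [IsTopologicalGroup G] [Group B] [TopologicalSpace B]
    [IsTopologicalGroup B] (hG : SSGP n G) (π : G →* B) (hπ : Continuous π)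
    (hπs : Function.Surjective π) : SSGP n B := by
  induction n generalizing G B with
  | zero =>
    have : Subsingleton G := hG
    exact hπs.subsingleton
  | succ n ih =>
    intro U hU
    obtain ⟨𝓗, h𝓗U, hN, hquot⟩ :=
      hG (π ⁻¹' U) (hπ.continuousAt.preimage_mem_nhds (by rwa [map_one]))
    refine ⟨Subgroup.map π '' 𝓗, ?_, ?_⟩
    · rintro _ ⟨H, hH, rfl⟩
      exact (image_mono (h𝓗U H hH)).trans (image_preimage_subset π U)
    have hA := Subgroup.normal_topologicalClosure_map hπ hπs hN
    refine SSGP.exists_normal_quotient_of_eq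
      (congrArg Subgroup.topologicalClosure (Subgroup.map_closure_biUnion π 𝓗)) ⟨hA, ?_⟩
    have hle := Subgroup.map_le_iff_le_comap.1
      (Subgroup.map_topologicalClosure_le hπ (Subgroup.closure (⋃ H ∈ 𝓗, (H : Set G))))
    exact ih hquot (QuotientGroup.map _ _ π hle) (QuotientGroup.continuous_map _ _ hπ hle)
      (QuotientGroup.map_surjective_of_surjective _ _ π (QuotientGroup.mk_surjective.comp hπs) hle)

/-- Continuous surjective homomorphic images preserve SSGP(n); in particular
Hausdorff quotients by closed normal subgroups preserve SSGP(n). -/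
theorem ssgp_of_continuous_surjective :
    (∀ (n : ℕ) (G : Type u) (B : Type v) [Group G] [TopologicalSpace G] [IsTopologicalGroup G]
        [T2Space G] [Group B] [TopologicalSpace B] [IsTopologicalGroup B] [T2Space B],
      SSGP n G → ∀ π : G →* B, Continuous π → Function.Surjective π → SSGP n B) ∧
    (∀ (n : ℕ) (G : Type u) [Group G] [TopologicalSpace G] [IsTopologicalGroup G] [T2Space G],
      SSGP n G → ∀ (K : Subgroup G) [K.Normal], IsClosed (K : Set G) → SSGP n (G ⧸ K)) :=
  ⟨fun n _ _ _ _ _ _ _ _ _ _ hG π hπ hπs => SSGP.of_continuous_surjective n hG π hπ hπs,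
    fun n _ _ _ _ _ hG K _ _ => SSGP.of_continuous_surjective n hG (QuotientGroup.mk' K)
      QuotientGroup.continuous_mk (QuotientGroup.mk'_surjective K)⟩
end

section
/- Let (G_i)_{i ∈ I} be a family of Hausdorff topological groups with G_i ∈ SSGP(n) for each i ∈ I. Then the product group ∏_{i ∈ I} G_i (with the product topology) belongs to SSGP(n), and the direct sum ⊕_{i ∈ I} G_i (the subgroup of the product consisting of elements with all but finitely many coordinates equal to the identity, with the topology inherited from the product) belongs to SSGP(n). -/
/-!
A neighbourhood `U` of `1` in `∏ Gᵢ` or `⊕ Gᵢ` pulls back along each coordinate embedding `eᵢ`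
to a neighbourhood of `1` in `Gᵢ`; the families `𝓗ᵢ` that `Gᵢ ∈ SSGP(n+1)` provides there,
pushed forward by `eᵢ`, all lie in `U`. If `Nᵢ` is the closed subgroup generated by `𝓗ᵢ`, the
closed subgroup generated by all of them is `∏ Nᵢ` (finitely supported elements are dense), resp.
`⊕ Gᵢ ∩ ∏ Nᵢ`, which is the kernel of the open surjection onto `∏ Gᵢ/Nᵢ`, resp. `⊕ Gᵢ/Nᵢ`. These
are in `SSGP(n)` by induction, and `SSGP(n)` passes to images under open continuous surjective
homomorphisms, so the quotient is in `SSGP(n)`.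
-/

universe u v

/-- The direct sum of a family of groups: the subgroup of the product
consisting of the elements with all but finitely many coordinates equal to the
identity. -/
def directSumSubgroup (I : Type v) (G : I → Type u) [∀ i, Group (G i)] :
    Subgroup (∀ i, G i) where
  carrier := {x | {i | x i ≠ 1}.Finite}
  one_mem' := by
    simp
  mul_mem' := by
    intro a b ha hb
    refine Set.Finite.subset (ha.union hb) fun i hi => ?_
    by_contra hcon
    simp only [Set.mem_union, Set.mem_setOf_eq, not_or, not_not] at hcon
    exact hi (by simp [Pi.mul_apply, hcon.1, hcon.2])
  inv_mem' := by
    intro a ha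
    show {i | a⁻¹ i ≠ 1}.Finite
    have h : {i | a⁻¹ i ≠ 1} = {i | a i ≠ 1} := by ext i; simp
    rw [h]; exact ha

open Function Set Topology

theorem Subgroup.closure_biUnion_eq_sSup {G : Type*} [Group G] (𝓗 : Set (Subgroup G)) :
    Subgroup.closure (⋃ K ∈ 𝓗, (K : Set G)) = sSup 𝓗 := by
  simp_rw [Subgroup.closure_iUnion, Subgroup.closure_eq, sSup_eq_iSup]

theorem Subgroup.sSup_image_map {G H : Type*} [Group G] [Group H] (φ : G →* H)
    (𝓗 : Set (Subgroup G)) : sSup (Subgroup.map φ '' 𝓗) = (sSup 𝓗).map φ := by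
  simp_rw [sSup_image, sSup_eq_iSup, Subgroup.map_iSup]

section TopologicalGroup

variable {G : Type*} {H : Type*} [Group G] [TopologicalSpace G] [IsTopologicalGroup G]
  [Group H] [TopologicalSpace H] [IsTopologicalGroup H]

theorem Subgroup.map_topologicalClosure_le_s9 {φ : G →* H} (hφ : Continuous φ) (K : Subgroup G) :
    K.topologicalClosure.map φ ≤ (K.map φ).topologicalClosure := by
  rintro _ ⟨x, hx, rfl⟩
  exact image_closure_subset_closure_image hφ ⟨x, hx, rfl⟩

theorem Subgroup.topologicalClosure_map_topologicalClosure_s9 {φ : G →* H} (hφ : Continuous φ)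
    (K : Subgroup G) :
    (K.topologicalClosure.map φ).topologicalClosure = (K.map φ).topologicalClosure :=
  le_antisymm
    (Subgroup.topologicalClosure_minimal _ (Subgroup.map_topologicalClosure_le_s9 hφ K)
      (Subgroup.isClosed_topologicalClosure _))
    (Subgroup.topologicalClosure_mono (Subgroup.map_mono K.le_topologicalClosure))

theorem Subgroup.topologicalClosure_iSup_map_topologicalClosure {ι : Type*} {G : ι → Type*}
    [∀ i, Group (G i)] [∀ i, TopologicalSpace (G i)] [∀ i, IsTopologicalGroup (G i)]
    {e : ∀ i, G i →* H} (he : ∀ i, Continuous (e i)) (K : ∀ i, Subgroup (G i)) :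
    (⨆ i, (K i).topologicalClosure.map (e i)).topologicalClosure =
      (⨆ i, (K i).map (e i)).topologicalClosure :=
  le_antisymm
    (Subgroup.topologicalClosure_minimal _
      (iSup_le fun i => (Subgroup.map_topologicalClosure_le_s9 (he i) (K i)).trans
        (Subgroup.topologicalClosure_mono (le_iSup (fun i => (K i).map (e i)) i)))
      (Subgroup.isClosed_topologicalClosure _))
    (Subgroup.topologicalClosure_mono
      (iSup_mono fun i => Subgroup.map_mono (K i).le_topologicalClosure))

theorem ssgp_succ_iff {n : ℕ} : SSGP (n + 1) G ↔ ∀ U ∈ 𝓝 (1 : G), ∃ 𝓗 : Set (Subgroup G),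
    (∀ K ∈ 𝓗, (K : Set G) ⊆ U) ∧
    ∃ (N : Subgroup G) (_ : N.Normal), (sSup 𝓗).topologicalClosure = N ∧ SSGP n (G ⧸ N) := by
  refine forall₂_congr fun U _ => exists_congr fun 𝓗 => and_congr_right fun _ => ?_
  rw [← Subgroup.closure_biUnion_eq_sSup]
  refine ⟨fun ⟨hN, hq⟩ => ⟨_, hN, rfl, hq⟩, ?_⟩
  rintro ⟨N, hN, rfl, hq⟩
  exact ⟨hN, hq⟩

theorem SSGP.of_isOpenQuotientMap {n : ℕ} {φ : G →* H} (hφ : IsOpenQuotientMap φ)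
    (hG : SSGP n G) : SSGP n H := by
  induction n generalizing G H with
  | zero =>
    have : Subsingleton G := hG
    exact hφ.surjective.subsingleton
  | succ n ih =>
    rw [ssgp_succ_iff] at hG ⊢
    intro U hU
    obtain ⟨𝓗, h𝓗U, N, hN, hN_eq, hq⟩ :=
      hG (φ ⁻¹' U) (hφ.continuous.continuousAt.preimage_mem_nhds (by rwa [map_one]))
    have hM : (N.map φ).topologicalClosure.Normal :=
      haveI := hN.map φ hφ.surjective
      Subgroup.is_normal_topologicalClosure _
    refine ⟨Subgroup.map φ '' 𝓗, ?_, _, hM, ?_, ?_⟩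
    · rintro _ ⟨K, hK, rfl⟩ _ ⟨x, hx, rfl⟩
      exact h𝓗U K hK hx
    · rw [Subgroup.sSup_image_map, ← hN_eq,
        Subgroup.topologicalClosure_map_topologicalClosure_s9 hφ.continuous]
    · have hle : N ≤ (N.map φ).topologicalClosure.comap φ := fun x hx =>
        Subgroup.le_topologicalClosure _ (Subgroup.mem_map_of_mem φ hx)
      refine ih (φ := QuotientGroup.map N _ φ hle) ?_ hq
      exact QuotientGroup.isOpenQuotientMap_mk.of_comp_iff.mp
        (QuotientGroup.isOpenQuotientMap_mk.comp hφ)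

theorem SSGP.quotient_ker {n : ℕ} {φ : G →* H} (hφ : IsOpenQuotientMap φ) (hH : SSGP n H) :
    SSGP n (G ⧸ φ.ker) := by
  let e := QuotientGroup.quotientKerEquivOfSurjective φ hφ.surjective
  have he : IsOpenQuotientMap e := QuotientGroup.isOpenQuotientMap_mk.of_comp_iff.mp hφ
  let e' : G ⧸ φ.ker ≃ₜ H := e.toEquiv.toHomeomorphOfContinuousOpen he.continuous he.isOpenMap
  exact hH.of_isOpenQuotientMap (φ := e.symm.toMonoidHom) e'.symm.isOpenQuotientMap

end TopologicalGroup

section Pi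

variable {I : Type*} {G : I → Type*} {H : I → Type*} [∀ i, Group (G i)] [∀ i, Group (H i)]

theorem MonoidHom.ker_piMap (f : ∀ i, G i →* H i) :
    (MonoidHom.piMap f).ker = Subgroup.pi univ fun i => (f i).ker := by
  ext x
  simp [funext_iff, Subgroup.mem_pi]

end Pi

namespace directSumSubgroup

variable {I : Type*} {G : I → Type*} [∀ i, Group (G i)]

theorem piecewise_mem (C : Finset I) [∀ j, Decidable (j ∈ C)] (u : ∀ i, G i) {d : ∀ i, G i}
    (hd : d ∈ directSumSubgroup I G) : C.piecewise u d ∈ directSumSubgroup I G := by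
  refine (C.finite_toSet.union hd).subset fun j hj => ?_
  by_cases hjC : j ∈ C
  · exact Or.inl hjC
  · exact Or.inr (by simpa [hjC] using hj)

section DecidableEq

variable [DecidableEq I]

theorem mulSingle_mem (i : I) (a : G i) : Pi.mulSingle i a ∈ directSumSubgroup I G :=
  (finite_singleton i).subset fun _ hj => by_contra fun hji => hj (Pi.mulSingle_eq_of_ne hji a)

def single (i : I) : G i →* directSumSubgroup I G :=
  (MonoidHom.mulSingle G i).codRestrict _ (mulSingle_mem i)

theorem iSup_map_mulSingle (N : ∀ i, Subgroup (G i)) :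
    ⨆ i, (N i).map (MonoidHom.mulSingle G i) = Subgroup.pi univ N ⊓ directSumSubgroup I G := by
  refine le_antisymm (iSup_le fun i => Subgroup.map_le_iff_le_comap.2 fun a ha =>
    ⟨(Subgroup.mulSingle_mem_pi i a).2 fun _ => ha, mulSingle_mem i a⟩) ?_
  rintro x ⟨hx, hfin : {i | x i ≠ 1}.Finite⟩
  refine Submonoid.pi_mem_of_mulSingle_mem_aux hfin.toFinset _
    (fun i hi => by_contra fun h => hi (hfin.mem_toFinset.2 h)) fun i _ => ?_
  exact Subgroup.mem_iSup_of_mem i (Subgroup.mem_map_of_mem _ (hx i (mem_univ i)))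

theorem iSup_map_single (N : ∀ i, Subgroup (G i)) :
    ⨆ i, (N i).map (single i) = (Subgroup.pi univ N).subgroupOf (directSumSubgroup I G) := by
  have hmap : (⨆ i, (N i).map (single i)).map (directSumSubgroup I G).subtype =
      ⨆ i, (N i).map (MonoidHom.mulSingle G i) := by
    simp_rw [Subgroup.map_iSup, Subgroup.map_map]
    rfl
  rw [← Subgroup.comap_map_eq_self_of_injective (directSumSubgroup I G).subtype_injective
    (⨆ i, (N i).map (single i)), hmap, iSup_map_mulSingle, ← Subgroup.inf_subgroupOf_right]
  rfl

end DecidableEq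

variable {H : I → Type*} [∀ i, Group (H i)]

theorem piMap_mem (f : ∀ i, G i →* H i) {x : ∀ i, G i} (hx : x ∈ directSumSubgroup I G) :
    MonoidHom.piMap f x ∈ directSumSubgroup I H :=
  (hx : {i | x i ≠ 1}.Finite).subset fun i hi h1 => hi (by simp [h1])

def map (f : ∀ i, G i →* H i) : directSumSubgroup I G →* directSumSubgroup I H :=
  ((MonoidHom.piMap f).comp (directSumSubgroup I G).subtype).codRestrict _ fun x =>
    piMap_mem f x.2

theorem coe_map_apply (f : ∀ i, G i →* H i) (x : directSumSubgroup I G) (i : I) :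
    (map f x : ∀ i, H i) i = f i ((x : ∀ i, G i) i) :=
  rfl

theorem ker_map (f : ∀ i, G i →* H i) :
    (map f).ker = (Subgroup.pi univ fun i => (f i).ker).subgroupOf (directSumSubgroup I G) := by
  rw [map, MonoidHom.ker_codRestrict, ← MonoidHom.ker_piMap, Subgroup.subgroupOf,
    MonoidHom.comap_ker]

theorem map_surjective {f : ∀ i, G i →* H i} (hf : ∀ i, Surjective (f i)) :
    Surjective (map f) := by
  classical
  rintro ⟨z, hz : {i | z i ≠ 1}.Finite⟩
  choose g hg using fun i => hf i (z i)
  refine ⟨⟨hz.toFinset.piecewise g 1, piecewise_mem _ g (one_mem _)⟩,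
    Subtype.ext (funext fun i => ?_)⟩
  by_cases hi : i ∈ hz.toFinset
  · simp [coe_map_apply, hi, hg]
  · simpa [coe_map_apply, hi] using (by_contra fun h => hi (hz.mem_toFinset.2 h) : z i = 1).symm

end directSumSubgroup

section Topology

variable {I : Type*} {G : I → Type*} [∀ i, Group (G i)] [∀ i, TopologicalSpace (G i)]

theorem Subgroup.isClosed_pi {N : ∀ i, Subgroup (G i)} (hN : ∀ i, IsClosed (N i : Set (G i))) :
    IsClosed (Subgroup.pi univ N : Set (∀ i, G i)) := by
  rw [Subgroup.coe_pi]
  exact isClosed_set_pi fun i _ => hN i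

theorem directSumSubgroup.continuous_single [DecidableEq I] (i : I) :
    Continuous (directSumSubgroup.single (G := G) i) :=
  (continuous_mulSingle i).subtype_mk _

variable [∀ i, IsTopologicalGroup (G i)]

theorem Subgroup.topologicalClosure_iSup_map_mulSingle [DecidableEq I] {N : ∀ i, Subgroup (G i)}
    (hN : ∀ i, IsClosed (N i : Set (G i))) :
    (⨆ i, (N i).map (MonoidHom.mulSingle G i)).topologicalClosure = Subgroup.pi univ N := by
  rw [directSumSubgroup.iSup_map_mulSingle]
  refine le_antisymm
    (Subgroup.topologicalClosure_minimal _ inf_le_left (Subgroup.isClosed_pi hN)) fun x hx => ?_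
  refine mem_closure_iff_nhds.2 fun t ht => ?_
  obtain ⟨C, hC⟩ := exists_finset_piecewise_mem_of_mem_nhds ht 1
  exact ⟨_, hC, C.piecewise_mem_set_pi hx (one_mem (Subgroup.pi univ N)),
    directSumSubgroup.piecewise_mem C x (one_mem _)⟩

namespace directSumSubgroup

theorem topologicalClosure_iSup_map_single [DecidableEq I] {N : ∀ i, Subgroup (G i)}
    (hN : ∀ i, IsClosed (N i : Set (G i))) :
    (⨆ i, (N i).map (single i)).topologicalClosure =
      (Subgroup.pi univ N).subgroupOf (directSumSubgroup I G) := by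
  rw [iSup_map_single]
  exact le_antisymm (Subgroup.topologicalClosure_minimal _ le_rfl
    ((Subgroup.isClosed_pi hN).preimage continuous_subtype_val)) (Subgroup.le_topologicalClosure _)

variable {H : I → Type*} [∀ i, Group (H i)] [∀ i, TopologicalSpace (H i)]
  [∀ i, IsTopologicalGroup (H i)]

theorem isOpenMap_map {f : ∀ i, G i →* H i} (hf : ∀ i, IsOpenQuotientMap (f i)) :
    IsOpenMap (map f) := by
  classical
  refine IsTopologicalGroup.isOpenMap_iff_nhds_one.2 fun V hV => ?_
  obtain ⟨W, hW, hWV⟩ := (mem_nhds_subtype _ _ _).1 (Filter.mem_map.1 hV)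
  rw [OneMemClass.coe_one, nhds_pi, Filter.mem_pi'] at hW
  obtain ⟨C, t, ht, hCt⟩ := hW
  have hbox : (C : Set I).pi (fun i => f i '' t i) ∈ 𝓝 (1 : ∀ i, H i) :=
    set_pi_mem_nhds C.finite_toSet fun i _ => by
      simpa using (hf i).isOpenMap.image_mem_nhds (ht i)
  refine Filter.mem_of_superset ((mem_nhds_subtype _ _ _).2 ⟨_, hbox, subset_rfl⟩) ?_
  intro z hz
  choose! u hu hfu using hz
  obtain ⟨d, rfl⟩ := map_surjective (fun i => (hf i).surjective) z
  -- Patching `d` on the finite set `C` with the lifts `u` lands in the box without leaving `⊕ G`.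
  let p : directSumSubgroup I G := ⟨C.piecewise u d, piecewise_mem C u d.2⟩
  have hpV : map f p ∈ V := hWV <| hCt fun i hi => by
    simpa [p, Finset.piecewise_eq_of_mem _ _ _ (Finset.mem_coe.1 hi)] using hu i hi
  have hpd : map f p = map f d := Subtype.ext <| funext fun i => by
    by_cases hi : i ∈ C
    · simp [p, coe_map_apply, hi, hfu i hi]
    · simp [p, coe_map_apply, hi]
  exact hpd ▸ hpV

theorem isOpenQuotientMap_map {f : ∀ i, G i →* H i} (hf : ∀ i, IsOpenQuotientMap (f i)) :
    IsOpenQuotientMap (map f) :=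
  ⟨map_surjective fun i => (hf i).surjective,
    (continuous_pi fun i => (hf i).continuous.comp
      ((continuous_apply i).comp continuous_subtype_val)).subtype_mk _,
    isOpenMap_map hf⟩

end directSumSubgroup

end Topology

theorem SSGP.succ_of_family {n : ℕ} {X : Type*} [Group X] [TopologicalSpace X]
    [IsTopologicalGroup X] {I : Type*} {G : I → Type*} [∀ i, Group (G i)]
    [∀ i, TopologicalSpace (G i)] [∀ i, IsTopologicalGroup (G i)]
    {e : ∀ i, G i →* X} (he : ∀ i, Continuous (e i)) (hG : ∀ i, SSGP (n + 1) (G i))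
    (hX : ∀ (N : ∀ i, Subgroup (G i)) [∀ i, (N i).Normal], (∀ i, IsClosed (N i : Set (G i))) →
      (∀ i, SSGP n (G i ⧸ N i)) → ∃ (M : Subgroup X) (_ : M.Normal),
        (⨆ i, (N i).map (e i)).topologicalClosure = M ∧ SSGP n (X ⧸ M)) :
    SSGP (n + 1) X := by
  rw [ssgp_succ_iff]
  intro U hU
  choose 𝓗 h𝓗U N hN hN_eq hq using fun i => ssgp_succ_iff.1 (hG i) (e i ⁻¹' U)
    ((he i).continuousAt.preimage_mem_nhds (by rwa [map_one]))
  obtain ⟨M, hM, hM_eq, hqM⟩ :=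
    hX N (fun i => hN_eq i ▸ Subgroup.isClosed_topologicalClosure _) hq
  refine ⟨⋃ i, Subgroup.map (e i) '' 𝓗 i, ?_, M, hM, ?_, hqM⟩
  · simp only [mem_iUnion]
    rintro _ ⟨i, K, hK, rfl⟩ _ ⟨x, hx, rfl⟩
    exact h𝓗U i K hK hx
  · simp_rw [sSup_iUnion, Subgroup.sSup_image_map, ← hM_eq, ← hN_eq]
    exact (Subgroup.topologicalClosure_iSup_map_topologicalClosure he _).symm

theorem ssgp_pi_and_directSum_general (n : ℕ) (I : Type v) (G : I → Type u) [∀ i, Group (G i)]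
    [∀ i, TopologicalSpace (G i)] [∀ i, IsTopologicalGroup (G i)]
    (h : ∀ i, SSGP n (G i)) :
    SSGP n (∀ i, G i) ∧ SSGP n (directSumSubgroup I G) := by
  classical
  induction n generalizing G with
  | zero =>
    have : ∀ i, Subsingleton (G i) := h
    exact ⟨inferInstanceAs (Subsingleton (∀ i, G i)),
      inferInstanceAs (Subsingleton (directSumSubgroup I G))⟩
  | succ n ih =>
    constructor
    · refine SSGP.succ_of_family (e := MonoidHom.mulSingle G) continuous_mulSingle h
        fun N _ hN hq => ⟨_, MonoidHom.normal_ker _, ?_,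
          SSGP.quotient_ker (φ := MonoidHom.piMap fun i => QuotientGroup.mk' (N i))
            (IsOpenQuotientMap.piMap fun _ => QuotientGroup.isOpenQuotientMap_mk) (ih _ hq).1⟩
      rw [Subgroup.topologicalClosure_iSup_map_mulSingle hN, MonoidHom.ker_piMap]
      simp_rw [QuotientGroup.ker_mk']
    · refine SSGP.succ_of_family (e := directSumSubgroup.single)
        directSumSubgroup.continuous_single h fun N _ hN hq => ⟨_, MonoidHom.normal_ker _, ?_,
          SSGP.quotient_ker (directSumSubgroup.isOpenQuotientMap_map
            (f := fun i => QuotientGroup.mk' (N i)) fun _ => QuotientGroup.isOpenQuotientMap_mk)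
            (ih _ hq).2⟩
      rw [directSumSubgroup.topologicalClosure_iSup_map_single hN, directSumSubgroup.ker_map]
      simp_rw [QuotientGroup.ker_mk']

/-- Products and direct sums (with the topology inherited from the product)
of SSGP(n) groups are SSGP(n). -/
theorem ssgp_pi_and_directSum (n : ℕ) (I : Type v) (G : I → Type u) [∀ i, Group (G i)]
    [∀ i, TopologicalSpace (G i)] [∀ i, IsTopologicalGroup (G i)] [∀ i, T2Space (G i)]
    (h : ∀ i, SSGP n (G i)) :
    SSGP n (∀ i, G i) ∧ SSGP n (directSumSubgroup I G) :=
  ssgp_pi_and_directSum_general n I G h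
end

section
/- For every Hausdorff topological group G there exist a Hausdorff topological group G* and a group homomorphism e : G → G* such that e is a homeomorphism onto its image, the image e[G] is a closed subgroup of G*, G* is path connected, and G* has the small subgroup generating property (SSGP). -/
universe u v

/-- The small subgroup generating property: for every neighborhood `U` of the
identity there is a family `𝓗` of subgroups of `G`, each contained in `U`,
such that the subgroup generated by `⋃ 𝓗` is dense in `G`. -/
def HasSSGP (G : Type u) [Group G] [TopologicalSpace G] : Prop :=
  ∀ U ∈ nhds (1 : G), ∃ 𝓗 : Set (Subgroup G),
    (∀ H ∈ 𝓗, (H : Set G) ⊆ U) ∧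
    Dense ((Subgroup.closure (⋃ H ∈ 𝓗, (H : Set G))) : Set G)

/-!
The witness is the Hartman–Mycielski group of `G`: step functions `[0, 1) → G` with pointwise
operations, topologized by convergence in measure, so that `f` is close to `1` when `f t ∈ U`
outside a set of small Lebesgue measure. `G` sits inside as the constant functions, and the
image is closed because a non-constant step function takes two separated values on sets of
positive measure. Truncating `f` to `[0, s)` gives a path from `1` to `f`. For SSGP, the
functions supported in a fixed interval of length `ℓ < ε` form a subgroup inside the basic
neighbourhood of measure `ε`, and every step function is the product of its restrictions to
the intervals `[kℓ, (k + 1)ℓ)`.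
-/

open Set Function Filter Topology MeasureTheory
open scoped ENNReal

def RightLocallyConstant {α : Type v} (f : ℝ → α) : Prop :=
  ∀ t, ∀ᶠ s in 𝓝[≥] t, f s = f t

namespace RightLocallyConstant

variable {M : Type v}

theorem const (c : M) : RightLocallyConstant fun _ : ℝ => c :=
  fun _ => Eventually.of_forall fun _ => rfl

theorem mul [Mul M] {f g : ℝ → M} (hf : RightLocallyConstant f)
    (hg : RightLocallyConstant g) : RightLocallyConstant (f * g) := fun t => by
  filter_upwards [hf t, hg t] with s hfs hgs
  simp only [Pi.mul_apply, hfs, hgs]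

theorem inv [Inv M] {f : ℝ → M} (hf : RightLocallyConstant f) : RightLocallyConstant f⁻¹ :=
  fun t => by
    filter_upwards [hf t] with s hfs
    simp only [Pi.inv_apply, hfs]

theorem mem_Ico (a b : ℝ) : RightLocallyConstant (· ∈ Ico a b) := by
  intro t
  rcases lt_or_ge t a with hta | hat
  · filter_upwards [nhdsWithin_le_nhds (Iio_mem_nhds hta)] with s hs
    simp [hta.not_ge, (show s < a from hs).not_ge]
  rcases lt_or_ge t b with htb | hbt
  · filter_upwards [Ico_mem_nhdsGE htb] with s hs
    simp [hat, htb, hat.trans hs.1, hs.2]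
  · filter_upwards [self_mem_nhdsWithin] with s hs
    simp [hbt.not_gt, (hbt.trans (show t ≤ s from hs)).not_gt]

theorem mulIndicator [One M] {s : Set ℝ} {f : ℝ → M} (hf : RightLocallyConstant f)
    (hs : RightLocallyConstant (· ∈ s)) : RightLocallyConstant (s.mulIndicator f) := fun t => by
  filter_upwards [hs t, hf t] with x hxs hxf
  classical
  simp only [Set.mulIndicator_apply, eq_iff_iff.mp hxs, hxf]

end RightLocallyConstant

theorem volume_pos_of_eventually_nhdsGE {P : ℝ → Prop} {t : ℝ} (h : ∀ᶠ s in 𝓝[≥] t, P s) :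
    0 < volume {s | P s} := by
  obtain ⟨u, htu, hsub⟩ := mem_nhdsGE_iff_exists_Ico_subset.1 h
  calc (0 : ℝ≥0∞) < volume (Ico t u) := by simpa using htu
    _ ≤ volume {s | P s} := measure_mono hsub

theorem mulIndicator_Ico_eq_of_notMem_uIcc {M : Type v} [One M] (f : ℝ → M) (a : ℝ) {b b' t : ℝ}
    (ht : t ∉ uIcc b b') : (Ico a b).mulIndicator f t = (Ico a b').mulIndicator f t := by
  classical
  rw [mem_uIcc] at ht
  simp only [mulIndicator_apply, mem_Ico]
  split_ifs <;> grind

/-- Right local constancy plus finite range says exactly that `f` is constant on the pieces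
`[tᵢ, tᵢ₊₁)` of a finite partition. -/
def stepSubgroup (G : Type u) [Group G] : Subgroup (ℝ → G) where
  carrier := {f | RightLocallyConstant f ∧ (range f).Finite ∧ mulSupport f ⊆ Ico 0 1}
  one_mem' := ⟨.const 1, finite_range_const, by simp⟩
  mul_mem' := fun {f g} ⟨hf, hfr, hfs⟩ ⟨hg, hgr, hgs⟩ =>
    ⟨hf.mul hg, (hfr.mul hgr).subset (range_subset_iff.2 fun t => mul_mem_mul ⟨t, rfl⟩ ⟨t, rfl⟩),
      (mulSupport_mul f g).trans (union_subset hfs hgs)⟩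
  inv_mem' := fun {f} ⟨hf, hfr, hfs⟩ =>
    ⟨hf.inv, hfr.inv.subset (range_subset_iff.2 fun t => by simp), by rwa [mulSupport_inv]⟩

theorem mulIndicator_mem_stepSubgroup {G : Type u} [Group G] {f : ℝ → G} {s : Set ℝ}
    (hf : RightLocallyConstant f) (hfr : (range f).Finite) (hs : RightLocallyConstant (· ∈ s))
    (hsf : s ∩ mulSupport f ⊆ Ico 0 1) : s.mulIndicator f ∈ stepSubgroup G :=
  ⟨hf.mulIndicator hs, (hfr.insert 1).subset (range_subset_iff.2 fun t => by
      classical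
      rw [mulIndicator_apply]; split_ifs <;> simp),
    mulSupport_mulIndicator.trans_subset hsf⟩

def HartmanMycielski (G : Type u) [Group G] : Type u := stepSubgroup G

namespace HartmanMycielski

variable {G : Type u} [Group G]

instance : Group (HartmanMycielski G) := inferInstanceAs (Group (stepSubgroup G))

instance : FunLike (HartmanMycielski G) ℝ G where
  coe (f : stepSubgroup G) := f.1
  coe_injective := Subtype.val_injective

def mk (f : ℝ → G) (hf : f ∈ stepSubgroup G) : HartmanMycielski G :=
  (⟨f, hf⟩ : stepSubgroup G)

@[simp] theorem coe_mk (f : ℝ → G) (hf : f ∈ stepSubgroup G) : ⇑(mk f hf) = f := rfl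

@[ext]
theorem ext {f g : HartmanMycielski G} (h : ∀ t, f t = g t) : f = g := DFunLike.ext _ _ h

@[simp] theorem one_apply (t : ℝ) : (1 : HartmanMycielski G) t = 1 := rfl

@[simp] theorem mul_apply (f g : HartmanMycielski G) (t : ℝ) : (f * g) t = f t * g t := rfl

@[simp] theorem inv_apply (f : HartmanMycielski G) (t : ℝ) : f⁻¹ t = (f t)⁻¹ := rfl

theorem mem_stepSubgroup (f : HartmanMycielski G) : ⇑f ∈ stepSubgroup G := (f : stepSubgroup G).2

theorem rightLocallyConstant (f : HartmanMycielski G) : RightLocallyConstant f :=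
  f.mem_stepSubgroup.1

theorem finite_range (f : HartmanMycielski G) : (range f).Finite := f.mem_stepSubgroup.2.1

theorem mulSupport_subset (f : HartmanMycielski G) : mulSupport f ⊆ Ico 0 1 :=
  f.mem_stepSubgroup.2.2

noncomputable def restrictIco (f : HartmanMycielski G) (a b : ℝ) : HartmanMycielski G :=
  mk ((Ico a b).mulIndicator f) <| mulIndicator_mem_stepSubgroup f.rightLocallyConstant
    f.finite_range (.mem_Ico a b) (inter_subset_right.trans f.mulSupport_subset)

theorem restrictIco_apply (f : HartmanMycielski G) (a b t : ℝ) :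
    f.restrictIco a b t = (Ico a b).mulIndicator f t := rfl

theorem restrictIco_of_le (f : HartmanMycielski G) {a b : ℝ} (hba : b ≤ a) :
    f.restrictIco a b = 1 := by
  ext t
  simp [restrictIco_apply, Ico_eq_empty_of_le hba]

theorem restrictIco_zero_one (f : HartmanMycielski G) : f.restrictIco 0 1 = f :=
  DFunLike.coe_injective (mulIndicator_eq_self.2 f.mulSupport_subset)

theorem restrictIco_mul_restrictIco (f : HartmanMycielski G) {a m b : ℝ} (ham : a ≤ m)
    (hmb : m ≤ b) : f.restrictIco a m * f.restrictIco m b = f.restrictIco a b := by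
  ext t
  simp only [mul_apply, restrictIco_apply, ← Ico_union_Ico_eq_Ico ham hmb,
    mulIndicator_union_of_disjoint Ico_disjoint_Ico_same]

variable (G) in
noncomputable def constHom : G →* HartmanMycielski G where
  toFun c := mk ((Ico 0 1).mulIndicator fun _ => c) <| mulIndicator_mem_stepSubgroup
    (.const c) finite_range_const (.mem_Ico 0 1) inter_subset_left
  map_one' := by ext t; simp
  map_mul' c d := by ext t; exact congrFun (mulIndicator_mul (Ico 0 1) (fun _ => c) fun _ => d) t

theorem constHom_apply (c : G) (t : ℝ) :
    constHom G c t = (Ico 0 1).mulIndicator (fun _ => c) t := rfl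

theorem constHom_apply_of_mem {c : G} {t : ℝ} (ht : t ∈ Ico (0 : ℝ) 1) : constHom G c t = c :=
  (constHom_apply c t).trans (mulIndicator_of_mem ht _)

theorem constHom_injective : Injective (constHom G) := fun c d h => by
  simpa only [constHom_apply_of_mem (left_mem_Ico.2 zero_lt_one)] using DFunLike.congr_fun h 0

def basicNhd (U : Set G) (ε : ℝ≥0∞) : Set (HartmanMycielski G) :=
  {f | volume {t | f t ∉ U} < ε}

theorem basicNhd_mono {U V : Set G} {ε δ : ℝ≥0∞} (hUV : U ⊆ V) (hεδ : ε ≤ δ) :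
    basicNhd U ε ⊆ basicNhd V δ := fun f hf =>
  (measure_mono fun t (ht : f t ∉ V) h => ht (hUV h)).trans_lt (hf.trans_le hεδ)

theorem mem_basicNhd_of_subset {f g : HartmanMycielski G} {U V : Set G} {ε : ℝ≥0∞}
    (h : {t | g t ∉ U} ⊆ {t | f t ∉ V}) (hf : f ∈ basicNhd V ε) : g ∈ basicNhd U ε :=
  (measure_mono h).trans_lt hf

theorem one_mem_basicNhd {U : Set G} (hU : 1 ∈ U) {ε : ℝ≥0∞} (hε : 0 < ε) :
    1 ∈ basicNhd U ε := by
  simpa [basicNhd, hU] using hε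

theorem exists_apply_mem_of_mem_basicNhd {f : HartmanMycielski G} {U : Set G} {ε : ℝ≥0∞}
    (hf : f ∈ basicNhd U ε) {P : Set ℝ} (hP : ε ≤ volume P) : ∃ s ∈ P, f s ∈ U := by
  by_contra! h
  exact (hf.trans_le hP).not_ge (measure_mono h)

theorem constHom_mem_basicNhd {c : G} {U : Set G} (hc : c ∈ U) (hU : 1 ∈ U) {ε : ℝ≥0∞}
    (hε : 0 < ε) : constHom G c ∈ basicNhd U ε := by
  refine mem_basicNhd_of_subset (fun t (ht : constHom G c t ∉ U) => ?_) (one_mem_basicNhd hU hε)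
  classical
  rw [constHom_apply, mulIndicator_apply] at ht
  split_ifs at ht <;> contradiction

variable (G) in
def supportedIn (s : Set ℝ) : Subgroup (HartmanMycielski G) where
  carrier := {f | mulSupport f ⊆ s}
  one_mem' := by simp
  mul_mem' {f g} hf hg := (mulSupport_mul f g).trans (union_subset hf hg)
  inv_mem' {f} hf := (mulSupport_inv (f := ⇑f)).trans_subset hf

theorem mem_basicNhd_of_mem_supportedIn {f : HartmanMycielski G} {s : Set ℝ}
    (hf : f ∈ supportedIn G s) {U : Set G} (hU : 1 ∈ U) {ε : ℝ≥0∞} (hs : volume s < ε) :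
    f ∈ basicNhd U ε :=
  (measure_mono fun t (ht : f t ∉ U) => hf fun h => ht (h ▸ hU)).trans_lt hs

theorem restrictIco_mem_iSup_supportedIn (f : HartmanMycielski G) {ℓ : ℝ} (hℓ : 0 < ℓ)
    (n : ℕ) (a b : ℝ) (hb : b ≤ a + n * ℓ) :
    f.restrictIco a b ∈ ⨆ a, supportedIn G (Ico a (a + ℓ)) := by
  have short {a b : ℝ} (h : b ≤ a + ℓ) : f.restrictIco a b ∈ ⨆ a, supportedIn G (Ico a (a + ℓ)) :=
    Subgroup.mem_iSup_of_mem a (mulSupport_mulIndicator_subset.trans (Ico_subset_Ico_right h))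
  induction n generalizing a with
  | zero => exact short (by push_cast at hb; linarith)
  | succ n ih =>
    rcases le_or_gt b (a + ℓ) with h | h
    · exact short h
    · rw [← f.restrictIco_mul_restrictIco (le_add_of_nonneg_right hℓ.le) h.le]
      exact mul_mem (short le_rfl) (ih _ (by push_cast at hb; linarith))

theorem iSup_supportedIn_Ico_eq_top {ℓ : ℝ} (hℓ : 0 < ℓ) :
    ⨆ a, supportedIn G (Ico a (a + ℓ)) = ⊤ := by
  refine (Subgroup.eq_top_iff' _).2 fun f => ?_
  obtain ⟨n, hn⟩ := exists_nat_ge (1 / ℓ)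
  rw [← f.restrictIco_zero_one]
  exact f.restrictIco_mem_iSup_supportedIn hℓ n 0 1 (by rw [zero_add, ← div_le_iff₀ hℓ]; exact hn)

variable [TopologicalSpace G] [IsTopologicalGroup G]

variable (G) in
abbrev groupFilterBasis : GroupFilterBasis (HartmanMycielski G) where
  sets := {V | ∃ U ∈ 𝓝 (1 : G), ∃ ε > 0, V = basicNhd U ε}
  nonempty := ⟨_, univ, univ_mem, 1, one_pos, rfl⟩
  inter_sets := by
    rintro _ _ ⟨U, hU, ε, hε, rfl⟩ ⟨V, hV, δ, hδ, rfl⟩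
    exact ⟨_, ⟨U ∩ V, inter_mem hU hV, min ε δ, lt_min hε hδ, rfl⟩,
      subset_inter (basicNhd_mono inter_subset_left (min_le_left _ _))
        (basicNhd_mono inter_subset_right (min_le_right _ _))⟩
  one' := by
    rintro _ ⟨U, hU, ε, hε, rfl⟩
    exact one_mem_basicNhd (mem_of_mem_nhds hU) hε
  mul' := by
    rintro _ ⟨U, hU, ε, hε, rfl⟩
    obtain ⟨V, hV, hVU⟩ := exists_nhds_one_split hU
    refine ⟨_, ⟨V, hV, ε / 2, ENNReal.half_pos hε.ne', rfl⟩, ?_⟩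
    rintro _ ⟨f, hf, g, hg, rfl⟩
    have hsub : {t | (f * g) t ∉ U} ⊆ {t | f t ∉ V} ∪ {t | g t ∉ V} := fun t ht => by
      change f t ∉ V ∨ g t ∉ V
      by_contra! h
      exact ht (hVU _ h.1 _ h.2)
    calc volume {t | (f * g) t ∉ U}
        ≤ volume {t | f t ∉ V} + volume {t | g t ∉ V} :=
          (measure_mono hsub).trans (measure_union_le _ _)
      _ < ε / 2 + ε / 2 := ENNReal.add_lt_add hf hg
      _ = ε := ENNReal.add_halves ε
  inv' := by
    rintro _ ⟨U, hU, ε, hε, rfl⟩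
    exact ⟨_, ⟨U⁻¹, inv_mem_nhds_one G hU, ε, hε, rfl⟩,
      fun f hf => mem_basicNhd_of_subset (fun t ht h => ht h) hf⟩
  conj' f := by
    rintro _ ⟨U, hU, ε, hε, rfl⟩
    -- `f` takes finitely many values, so conjugating by them is uniformly controlled.
    let W := ⋂ c ∈ range f, (fun x => c * x * c⁻¹) ⁻¹' U
    have hW : W ∈ 𝓝 (1 : G) := (biInter_mem f.finite_range).2 fun c _ =>
      (by fun_prop : Continuous fun x => c * x * c⁻¹).continuousAt.preimage_mem_nhds
        (by simpa using hU)
    exact ⟨_, ⟨W, hW, ε, hε, rfl⟩, fun g hg => mem_basicNhd_of_subset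
      (fun t ht h => ht (mem_iInter₂.1 h (f t) (mem_range_self t))) hg⟩

instance : TopologicalSpace (HartmanMycielski G) := (groupFilterBasis G).topology

instance : IsTopologicalGroup (HartmanMycielski G) := (groupFilterBasis G).isTopologicalGroup

theorem basicNhd_mem_nhds_one {U : Set G} (hU : U ∈ 𝓝 1) {ε : ℝ≥0∞} (hε : 0 < ε) :
    basicNhd U ε ∈ 𝓝 (1 : HartmanMycielski G) :=
  (groupFilterBasis G).mem_nhds_one ⟨U, hU, ε, hε, rfl⟩

theorem tendsto_nhds_of_tendsto_volume_ne {α : Type*} {l : Filter α}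
    {p : α → HartmanMycielski G} {f : HartmanMycielski G}
    (h : Tendsto (fun a => volume {t | p a t ≠ f t}) l (𝓝 0)) : Tendsto p l (𝓝 f) := by
  rw [← nhds_translation_mul_inv f, tendsto_comap_iff,
    (groupFilterBasis G).nhds_one_hasBasis.tendsto_right_iff]
  rintro _ ⟨U, hU, ε, hε, rfl⟩
  filter_upwards [(tendsto_order.1 h).2 ε hε] with a ha
  refine (measure_mono fun t (ht : (p a * f⁻¹) t ∉ U) => ?_).trans_lt ha
  refine fun heq => ht ?_
  simpa [heq] using mem_of_mem_nhds hU

instance [T2Space G] : T2Space (HartmanMycielski G) := by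
  refine IsTopologicalGroup.t2Space_of_one_sep fun f hf => ?_
  obtain ⟨t, ht⟩ : ∃ t, f t ≠ 1 := by
    by_contra! h
    exact hf (ext h)
  have hpos := volume_pos_of_eventually_nhdsGE (f.rightLocallyConstant t)
  refine ⟨_, basicNhd_mem_nhds_one (isOpen_compl_singleton.mem_nhds ht.symm) hpos, ?_⟩
  simp [basicNhd]

theorem isEmbedding_constHom : IsEmbedding (constHom G) := by
  refine ⟨IsTopologicalGroup.isInducing_iff_nhds_one.2 (le_antisymm ?_ ?_), constHom_injective⟩
  · refine ((groupFilterBasis G).nhds_one_hasBasis.comap _).ge_iff.2 ?_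
    rintro _ ⟨U, hU, ε, hε, rfl⟩
    exact mem_of_superset hU fun c hc => constHom_mem_basicNhd hc (mem_of_mem_nhds hU) hε
  · refine fun S hS => mem_comap.2 ⟨_, basicNhd_mem_nhds_one hS one_pos, fun c hc => ?_⟩
    obtain ⟨t, ht, hcS⟩ := exists_apply_mem_of_mem_basicNhd hc (P := Ico 0 1) (by simp)
    rwa [constHom_apply_of_mem ht] at hcS

theorem isClosed_range_constHom [T2Space G] : IsClosed (range (constHom G)) := by
  refine isOpen_compl_iff.1 (isOpen_iff_mem_nhds.2 fun f hf => ?_)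
  obtain ⟨t₁, ht₁, t₂, ht₂, hne⟩ : ∃ t₁ ∈ Ico (0 : ℝ) 1, ∃ t₂ ∈ Ico (0 : ℝ) 1, f t₁ ≠ f t₂ := by
    by_contra! h
    refine hf ⟨f 0, ext fun t => ?_⟩
    by_cases ht : t ∈ Ico (0 : ℝ) 1
    · rw [constHom_apply_of_mem ht, h 0 (left_mem_Ico.2 zero_lt_one) t ht]
    · rw [constHom_apply, mulIndicator_of_notMem ht, eq_comm, ← notMem_mulSupport]
      exact fun h => ht (f.mulSupport_subset h)
  obtain ⟨A, B, hA, hB, hA₁, hB₂, hAB⟩ := t2_separation hne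
  -- A function near `f` is `U`-close to `f` somewhere on each of the two level sets below,
  -- which have positive measure, so it takes values in both `A` and `B`.
  have hP {i : ℝ} (hi : i ∈ Ico (0 : ℝ) 1) : 0 < volume {s | s ∈ Ico (0 : ℝ) 1 ∧ f s = f i} :=
    volume_pos_of_eventually_nhdsGE <| by
      filter_upwards [Ico_mem_nhdsGE hi.2, f.rightLocallyConstant i] with s hs hfs
      exact ⟨⟨hi.1.trans hs.1, hs.2⟩, hfs⟩
  let U := (f t₁ * ·) ⁻¹' A ∩ (f t₂ * ·) ⁻¹' B
  have hU : U ∈ 𝓝 (1 : G) := inter_mem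
    ((continuous_const_mul _).continuousAt.preimage_mem_nhds (by simpa using hA.mem_nhds hA₁))
    ((continuous_const_mul _).continuousAt.preimage_mem_nhds (by simpa using hB.mem_nhds hB₂))
  refine ((groupFilterBasis G).nhds_hasBasis f).mem_iff.2
    ⟨_, ⟨U, hU, _, lt_min (hP ht₁) (hP ht₂), rfl⟩, ?_⟩
  rintro _ ⟨h, hh, rfl⟩ ⟨c, hc⟩
  obtain ⟨s₁, ⟨hs₁, hfs₁⟩, hhs₁⟩ := exists_apply_mem_of_mem_basicNhd hh (min_le_left _ _)
  obtain ⟨s₂, ⟨hs₂, hfs₂⟩, hhs₂⟩ := exists_apply_mem_of_mem_basicNhd hh (min_le_right _ _)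
  have hc' {s : ℝ} (hs : s ∈ Ico (0 : ℝ) 1) : c = f s * h s := by
    rw [← constHom_apply_of_mem hs (c := c), hc, mul_apply]
  have hcA : c ∈ A := by rw [hc' hs₁, hfs₁]; exact hhs₁.1
  have hcB : c ∈ B := by rw [hc' hs₂, hfs₂]; exact hhs₂.2
  exact disjoint_left.1 hAB hcA hcB

theorem continuous_restrictIco (f : HartmanMycielski G) (a : ℝ) : Continuous (f.restrictIco a) := by
  refine continuous_iff_continuousAt.2 fun b => tendsto_nhds_of_tendsto_volume_ne ?_
  have hdist : Tendsto (fun b' => ENNReal.ofReal |b - b'|) (𝓝 b) (𝓝 0) := by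
    simpa using ENNReal.tendsto_ofReal ((continuous_sub_left b).abs.tendsto b)
  refine tendsto_of_tendsto_of_tendsto_of_le_of_le tendsto_const_nhds hdist (fun _ => zero_le)
    fun b' => (measure_mono fun t (ht : _ ≠ _) => ?_).trans_eq Real.volume_interval
  exact not_imp_comm.1 (mulIndicator_Ico_eq_of_notMem_uIcc f a) ht

theorem joined_one (f : HartmanMycielski G) : Joined 1 f :=
  ⟨{ toFun s := f.restrictIco 0 s
     continuous_toFun := (f.continuous_restrictIco 0).comp continuous_subtype_val
     source' := f.restrictIco_of_le le_rfl
     target' := f.restrictIco_zero_one }⟩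

instance : PathConnectedSpace (HartmanMycielski G) :=
  ⟨⟨1⟩, fun f g => (joined_one f).symm.trans (joined_one g)⟩

theorem hasSSGP : HasSSGP (HartmanMycielski G) := by
  intro W hW
  obtain ⟨_, ⟨U, hU, ε, hε, rfl⟩, hUW⟩ := (groupFilterBasis G).nhds_one_hasBasis.mem_iff.1 hW
  obtain ⟨ℓ, -, hℓ, hℓε⟩ := ENNReal.lt_iff_exists_real_btwn.1 hε
  refine ⟨range fun a => supportedIn G (Ico a (a + ℓ)), forall_mem_range.2 fun a f hf =>
    hUW (mem_basicNhd_of_mem_supportedIn hf (mem_of_mem_nhds hU) ?_), ?_⟩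
  · simpa [Real.volume_Ico] using hℓε
  · rw [biUnion_range, ← Subgroup.iSup_eq_closure,
      iSup_supportedIn_Ico_eq_top (ENNReal.ofReal_pos.1 hℓ), Subgroup.coe_top]
    exact dense_univ

end HartmanMycielski

/-- Every Hausdorff topological group embeds as a closed subgroup of a path
connected Hausdorff topological group with the SSGP property. -/
theorem exists_closed_embedding_pathConnected_ssgp (G : Type u) [Group G] [TopologicalSpace G]
    [IsTopologicalGroup G] [T2Space G] :
    ∃ (Gstar : Type u) (gG : Group Gstar) (tG : TopologicalSpace Gstar),
      haveI := gG
      haveI := tG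
      ∃ (_ : IsTopologicalGroup Gstar) (_ : T2Space Gstar) (e : G →* Gstar),
        Topology.IsEmbedding (⇑e) ∧ IsClosed (Set.range e) ∧ PathConnectedSpace Gstar ∧ HasSSGP Gstar :=
  ⟨HartmanMycielski G, inferInstance, inferInstance, inferInstance, inferInstance,
    HartmanMycielski.constHom G, HartmanMycielski.isEmbedding_constHom,
    HartmanMycielski.isClosed_range_constHom, inferInstance, HartmanMycielski.hasSSGP⟩
end

section
/- Let G be a (possibly nonabelian) Hausdorff topological group which is torsion of bounded order (i.e., there is an integer M ≥ 1 such that x^M = 1_G for every x ∈ G) and which has no proper open subgroup. Then G has the small subgroup generating property (SSGP). -/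
/-!
Fix a neighbourhood `U` of `1` and let `M` be a bound for the exponent. By continuity of the
finitely many maps `x ↦ x ^ k`, `k < M`, there is a neighbourhood `V` of `1` with `x ^ k ∈ U` for
all `x ∈ V` and `k < M`; since `x ^ M = 1`, these are all the powers of `x`, so each cyclic
subgroup `⟨x⟩`, `x ∈ V`, lies in `U`. The subgroup generated by these cyclic subgroups contains
`V`, hence is open, hence is all of `G`.
-/

universe u

open Filter Topology

theorem zpowers_subset_of_pow_eq_one {G : Type*} [Group G] {x : G} {M : ℕ} {U : Set G}
    (hM : 0 < M) (hxM : x ^ M = 1) (hU : ∀ k < M, x ^ k ∈ U) :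
    (Subgroup.zpowers x : Set G) ⊆ U := by
  classical
  intro y hy
  have hfin : IsOfFinOrder x := isOfFinOrder_iff_pow_eq_one.2 ⟨M, hM, hxM⟩
  obtain ⟨k, hk, rfl⟩ := Finset.mem_image.1 (hfin.mem_zpowers_iff_mem_range_orderOf.1 hy)
  exact hU k ((Finset.mem_range.1 hk).trans_le (orderOf_le_of_pow_eq_one hM hxM))

theorem eventually_forall_pow_mem_of_mem_nhds_one {G : Type*} [Monoid G] [TopologicalSpace G]
    [ContinuousMul G] (M : ℕ) {U : Set G} (hU : U ∈ 𝓝 1) :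
    ∀ᶠ x in 𝓝 (1 : G), ∀ k < M, x ^ k ∈ U := by
  simpa only [Finset.mem_range] using (Finset.range M).eventually_all.2
    fun k _ => (continuous_pow k).tendsto' 1 1 (one_pow k) hU

theorem hasSSGP_of_boundedTorsion_no_proper_open_subgroup_general (G : Type u) [Group G]
    [TopologicalSpace G] [IsTopologicalGroup G]
    (M : ℕ) (hM : 1 ≤ M) (htor : ∀ x : G, x ^ M = 1)
    (hopen : ∀ H : Subgroup G, IsOpen (H : Set G) → H = ⊤) :
    HasSSGP G := by
  intro U hU
  set V : Set G := {x | ∀ k < M, x ^ k ∈ U}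
  refine ⟨Subgroup.zpowers '' V, ?_, ?_⟩
  · rintro _ ⟨x, hx, rfl⟩
    exact zpowers_subset_of_pow_eq_one hM (htor x) hx
  · have hV : V ⊆ Subgroup.closure (⋃ H ∈ Subgroup.zpowers '' V, (H : Set G)) := fun x hx =>
      Subgroup.subset_closure <|
        Set.mem_biUnion (Set.mem_image_of_mem _ hx) (Subgroup.mem_zpowers x)
    rw [hopen _ <| Subgroup.isOpen_of_mem_nhds _ <|
      mem_of_superset (eventually_forall_pow_mem_of_mem_nhds_one M hU) hV]
    exact dense_univ

/-- A (possibly nonabelian) Hausdorff topological group which is torsion of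
bounded order and has no proper open subgroup has the SSGP property. -/
theorem hasSSGP_of_boundedTorsion_no_proper_open_subgroup (G : Type u) [Group G]
    [TopologicalSpace G] [IsTopologicalGroup G] [T2Space G]
    (M : ℕ) (hM : 1 ≤ M) (htor : ∀ x : G, x ^ M = 1)
    (hopen : ∀ H : Subgroup G, IsOpen (H : Set G) → H = ⊤) :
    HasSSGP G :=
  hasSSGP_of_boundedTorsion_no_proper_open_subgroup_general G M hM htor hopen
end

section
/- Let G be a (possibly nonabelian) connected Hausdorff topological group which is torsion of bounded order (i.e., there is an integer M ≥ 1 such that x^M = 1_G for every x ∈ G). Then G has the small subgroup generating property (SSGP). -/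
open scoped Topology

universe u v

/-!
Fix a neighborhood `U` of `1`. By continuity of the finitely many maps `x ↦ x ^ j`, `j < M`,
there is a neighborhood `V` of `1` with `x ^ j ∈ U` for all `x ∈ V` and `j < M`. Since
`x ^ M = 1`, every element of the cyclic group generated by `x ∈ V` is such a power, so these
cyclic groups lie in `U`. The subgroup they generate contains `V`, so it is open, hence clopen,
hence all of `G` by connectedness.
-/

lemma exists_mem_nhds_one_forall_pow_mem {G : Type*} [Monoid G] [TopologicalSpace G]
    [ContinuousMul G] (n : ℕ) {U : Set G} (hU : U ∈ 𝓝 1) :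
    ∃ V ∈ 𝓝 (1 : G), ∀ x ∈ V, ∀ j < n, x ^ j ∈ U := by
  refine ⟨⋂ j < n, (· ^ j) ⁻¹' U, ?_, fun x hx j hj ↦ Set.mem_iInter₂.mp hx j hj⟩
  refine (Filter.biInter_mem (Set.finite_lt_nat n)).mpr fun j _ ↦ ?_
  exact (continuous_pow j).continuousAt.preimage_mem_nhds (by rwa [one_pow])

lemma Subgroup.zpowers_subset_of_forall_pow_mem {G : Type*} [Group G] {x : G} {n : ℕ}
    (hn : 0 < n) (hx : x ^ n = 1) {U : Set G} (hU : ∀ j < n, x ^ j ∈ U) :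
    (zpowers x : Set G) ⊆ U := by
  have hfin : IsOfFinOrder x := isOfFinOrder_iff_pow_eq_one.mpr ⟨n, hn, hx⟩
  intro _ hy
  obtain ⟨m, rfl⟩ : ∃ m : ℕ, x ^ m = _ := hfin.mem_powers_iff_mem_zpowers.mpr hy
  rw [← pow_mod_orderOf]
  exact hU _ ((Nat.mod_lt m hfin.orderOf_pos).trans_le (orderOf_le_of_pow_eq_one hn hx))

lemma Subgroup.eq_top_of_mem_nhds_one {G : Type*} [Group G] [TopologicalSpace G]
    [SeparatelyContinuousMul G] [ConnectedSpace G] (H : Subgroup G) (hH : (H : Set G) ∈ 𝓝 1) :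
    H = ⊤ := by
  have hopen : IsOpen (H : Set G) := H.isOpen_of_mem_nhds hH
  have huniv : (H : Set G) = Set.univ :=
    IsClopen.eq_univ ⟨H.isClosed_of_isOpen hopen, hopen⟩ ⟨1, H.one_mem⟩
  exact SetLike.coe_injective huniv

theorem hasSSGP_of_boundedTorsion_connected_general (G : Type u) [Group G]
    [TopologicalSpace G] [IsTopologicalGroup G] [ConnectedSpace G]
    (M : ℕ) (hM : 1 ≤ M) (htor : ∀ x : G, x ^ M = 1) :
    HasSSGP G := by
  intro U hU
  obtain ⟨V, hV, hVU⟩ := exists_mem_nhds_one_forall_pow_mem M hU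
  refine ⟨Subgroup.zpowers '' V, ?_, ?_⟩
  · rintro _ ⟨x, hx, rfl⟩
    exact Subgroup.zpowers_subset_of_forall_pow_mem hM (htor x) (hVU x hx)
  · have hVsub : V ⊆ ⋃ H ∈ Subgroup.zpowers '' V, (H : Set G) := fun x hx ↦
      Set.mem_biUnion ⟨x, hx, rfl⟩ (Subgroup.mem_zpowers x)
    have htop := Subgroup.eq_top_of_mem_nhds_one _
      (Filter.mem_of_superset hV (hVsub.trans Subgroup.subset_closure))
    rw [htop, Subgroup.coe_top]
    exact dense_univ

/-- A (possibly nonabelian) connected Hausdorff topological group which is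
torsion of bounded order has the SSGP property. -/
theorem hasSSGP_of_boundedTorsion_connected (G : Type u) [Group G]
    [TopologicalSpace G] [IsTopologicalGroup G] [T2Space G] [ConnectedSpace G]
    (M : ℕ) (hM : 1 ≤ M) (htor : ∀ x : G, x ^ M = 1) :
    HasSSGP G :=
  hasSSGP_of_boundedTorsion_connected_general G M hM htor
end

section
/- Let (p_i)_{i<ω} be a strictly increasing sequence of prime numbers. Then the direct sum G = ⊕_{i<ω} ℤ/p_iℤ admits an SSGP topology; that is, there is a Hausdorff group topology 𝒯 on G such that (G,𝒯) has the small subgroup generating property (SSGP). -/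
universe u v

/-- The small subgroup generating property, additive version: for every
neighborhood `U` of `0` there is a family `𝓗` of subgroups of `G`, each
contained in `U`, such that the subgroup generated by `⋃ 𝓗` is dense in `G`. -/
def AddHasSSGP (G : Type u) [AddGroup G] [TopologicalSpace G] : Prop :=
  ∀ U ∈ nhds (0 : G), ∃ 𝓗 : Set (AddSubgroup G),
    (∀ H ∈ 𝓗, (H : Set G) ⊆ U) ∧
    Dense ((AddSubgroup.closure (⋃ H ∈ 𝓗, (H : Set G))) : Set G)

open scoped DirectSum

/-!
Identify `ZMod (p n)` with the subgroup `(1 / p n) ℤ / ℤ` of the circle `𝕋 = ℝ / ℤ` and send it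
to the `𝕋`-valued step functions supported on the dyadic interval `Iₙ` of level `(unpair n).1` and
index `(unpair n).2`. This is a homomorphism `φ` from the direct sum into `L¹(ℝ, 𝕋)`; give the
direct sum the topology induced by `φ`.

`φ` is injective: the step function `φ x` is constant on every dyadic interval finer than all the
`Iₙ` with `xₙ ≠ 0`, so if it vanishes a.e. it vanishes everywhere; but at a point of `Iᵢ` with
`xᵢ ≠ 0` its value is a sum of elements of pairwise coprime orders `p n`, one of them nonzero.

The summands of level `≥ M` have norm `≤ 2⁻ᴹ`, and they generate a dense subgroup: splitting `Iᵢ`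
into its `2ᵈ` subintervals `Iₙ` of level `m + d` and replacing the value `a / pᵢ` on each of them by
the nearest multiple of `1 / pₙ` costs at most `2⁻ᵐ · max 1 / (2 pₙ)` in `L¹`, which is small
because these `n` are at least `m + d` and `pₙ → ∞`.
-/

open MeasureTheory Set Filter Topology Function

noncomputable section

/-- The dyadic interval `[k / 2 ^ m, (k + 1) / 2 ^ m)`. -/
def dyadicInterval (m : ℕ) (k : ℤ) : Set ℝ := {t | ⌊(2 : ℝ) ^ m * t⌋ = k}

lemma measurableSet_dyadicInterval (m : ℕ) (k : ℤ) : MeasurableSet (dyadicInterval m k) :=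
  (Int.measurable_floor.comp (measurable_const_mul _)) (measurableSet_singleton k)

lemma volume_dyadicInterval (m : ℕ) (k : ℤ) :
    volume (dyadicInterval m k) = ENNReal.ofReal ((2 ^ m)⁻¹) := by
  have h : dyadicInterval m k = ((2 : ℝ) ^ m * ·) ⁻¹' Ico (k : ℝ) (k + 1) := by
    ext t; exact Int.floor_eq_iff
  rw [h, Real.volume_preimage_mul_left (by positivity), Real.volume_Ico, add_sub_cancel_left,
    ENNReal.ofReal_one, mul_one, abs_of_pos (by positivity)]

lemma dyadicInterval_subset (m d : ℕ) (k : ℤ) :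
    dyadicInterval (m + d) k ⊆ dyadicInterval m (k / 2 ^ d) := by
  intro t (ht : ⌊(2 : ℝ) ^ (m + d) * t⌋ = k)
  have h := Int.floor_div_natCast ((2 : ℝ) ^ (m + d) * t) (2 ^ d)
  rw [ht, pow_add, Nat.cast_pow, Nat.cast_ofNat, mul_right_comm, mul_div_cancel_right₀ _
    (by positivity)] at h
  exact h.trans (by push_cast; rfl)

lemma pairwise_disjoint_dyadicInterval (m : ℕ) : Pairwise (Disjoint on dyadicInterval m) :=
  fun _ _ hkk' => Set.disjoint_left.2 fun _ h h' => hkk' (h.symm.trans h')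

lemma dyadicInterval_subset_or_disjoint {m m' : ℕ} (h : m ≤ m') (k k' : ℤ) :
    dyadicInterval m' k' ⊆ dyadicInterval m k ∨
      Disjoint (dyadicInterval m' k') (dyadicInterval m k) := by
  obtain ⟨d, rfl⟩ := Nat.exists_eq_add_of_le h
  have hsub := dyadicInterval_subset m d k'
  by_cases hk : k' / 2 ^ d = k
  · exact .inl (hk ▸ hsub)
  · exact .inr ((pairwise_disjoint_dyadicInterval m hk).mono_left hsub)

lemma dyadicInterval_eq_biUnion (m d : ℕ) (k : ℤ) :
    dyadicInterval m k = ⋃ r ∈ Finset.range (2 ^ d), dyadicInterval (m + d) (2 ^ d * k + r) := by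
  have h2d : (0 : ℤ) < 2 ^ d := by positivity
  refine Subset.antisymm (fun t ht => ?_) (iUnion₂_subset fun r hr => ?_)
  · set z := ⌊(2 : ℝ) ^ (m + d) * t⌋
    have hz : z / 2 ^ d = k := (dyadicInterval_subset m d z rfl).symm.trans ht
    refine mem_iUnion₂.2 ⟨(z % 2 ^ d).toNat, ?_, ?_⟩
    · rw [Finset.mem_range, ← Int.ofNat_lt, Int.toNat_of_nonneg (Int.emod_nonneg z h2d.ne')]
      exact_mod_cast Int.emod_lt_of_pos z h2d
    · show z = _
      rw [Int.toNat_of_nonneg (Int.emod_nonneg z h2d.ne'), ← hz, Int.mul_ediv_add_emod]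
  · have hr : (2 ^ d * k + r) / 2 ^ d = k := by
      rw [add_comm, Int.add_mul_ediv_left _ _ h2d.ne', Int.ediv_eq_zero_of_lt (by positivity)
        (by exact_mod_cast Finset.mem_range.1 hr), zero_add]
    simpa [hr] using dyadicInterval_subset m d (2 ^ d * k + r)

section IndicatorConstLp

variable {α E ι : Type*} [MeasurableSpace α] {μ : Measure α} [NormedAddCommGroup E]
  {p : ENNReal}

lemma coeFn_sum_indicatorConstLp (s : Finset ι) {t : ι → Set α} (ht : ∀ i, MeasurableSet (t i))
    (hμt : ∀ i, μ (t i) ≠ ⊤) (c : ι → E) :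
    ⇑(∑ i ∈ s, indicatorConstLp p (ht i) (hμt i) (c i))
      =ᵐ[μ] fun x => ∑ i ∈ s, (t i).indicator (fun _ => c i) x := by
  filter_upwards [Lp.coeFn_fun_finsetSum s fun i => indicatorConstLp p (ht i) (hμt i) (c i),
    (eventually_all_finset s).2 fun i _ =>
      indicatorConstLp_coeFn (p := p) (hs := ht i) (hμs := hμt i) (c := c i)]
    with x hx hi
  rw [hx]
  exact Finset.sum_congr rfl hi

lemma indicatorConstLp_eq_sum_of_eq_biUnion {S : Set α} (hS : MeasurableSet S) (hμS : μ S ≠ ⊤)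
    (s : Finset ι) {t : ι → Set α} (ht : ∀ i, MeasurableSet (t i)) (hμt : ∀ i, μ (t i) ≠ ⊤)
    (hd : (s : Set ι).PairwiseDisjoint t) (hSt : S = ⋃ i ∈ s, t i) (c : E) :
    indicatorConstLp p hS hμS c = ∑ i ∈ s, indicatorConstLp p (ht i) (hμt i) c := by
  refine Lp.ext (indicatorConstLp_coeFn.trans ?_)
  rw [hSt, Finset.indicator_biUnion s t hd]
  exact (coeFn_sum_indicatorConstLp s ht hμt fun _ => c).symm

end IndicatorConstLp

def dyadicIndicatorLp (m : ℕ) (k : ℤ) : UnitAddCircle →+ Lp UnitAddCircle 1 (volume : Measure ℝ) :=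
  AddMonoidHom.mk' (indicatorConstLp 1 (measurableSet_dyadicInterval m k)
    (by simp [volume_dyadicInterval])) fun _ _ => indicatorConstLp_add.symm

lemma norm_dyadicIndicatorLp (m : ℕ) (k : ℤ) (c : UnitAddCircle) :
    ‖dyadicIndicatorLp m k c‖ = ‖c‖ * (2 ^ m)⁻¹ := by
  rw [dyadicIndicatorLp, AddMonoidHom.mk'_apply, norm_indicatorConstLp one_ne_zero
    ENNReal.one_ne_top, measureReal_def, volume_dyadicInterval, ENNReal.toReal_ofReal
    (by positivity), ENNReal.toReal_one, div_one, Real.rpow_one]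

lemma dyadicIndicatorLp_eq_sum (m d : ℕ) (k : ℤ) (c : UnitAddCircle) :
    dyadicIndicatorLp m k c
      = ∑ r ∈ Finset.range (2 ^ d), dyadicIndicatorLp (m + d) (2 ^ d * k + r) c :=
  indicatorConstLp_eq_sum_of_eq_biUnion (measurableSet_dyadicInterval m k)
    (by simp [volume_dyadicInterval]) _ (fun _ => measurableSet_dyadicInterval _ _)
    (fun _ => by simp [volume_dyadicInterval])
    (((pairwise_disjoint_dyadicInterval (m + d)).comp_of_injective
      fun r r' h => by simpa using h).set_pairwise _) (dyadicInterval_eq_biUnion m d k) c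

lemma sum_ne_zero_of_coprime_nsmul_eq_zero {G ι : Type*} [AddCommGroup G] {s : Finset ι}
    {g : ι → G} {n : ι → ℕ} (hn : (s : Set ι).Pairwise (Nat.Coprime on n))
    (hg : ∀ j ∈ s, n j • g j = 0) {i : ι} (hi : i ∈ s) (hgi : g i ≠ 0) :
    ∑ j ∈ s, g j ≠ 0 := by
  classical
  intro hsum
  set N := ∏ j ∈ s.erase i, n j
  have hrest : N • ∑ j ∈ s.erase i, g j = 0 := by
    rw [Finset.smul_sum]
    refine Finset.sum_eq_zero fun j hj => ?_
    obtain ⟨N', hN'⟩ : n j ∣ N := Finset.dvd_prod_of_mem n hj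
    rw [hN', mul_comm, mul_smul, hg j (Finset.mem_of_mem_erase hj), smul_zero]
  have hNg : N • g i = 0 := by
    rw [← Finset.add_sum_erase s g hi] at hsum
    rw [eq_neg_of_add_eq_zero_left hsum, smul_neg, hrest, neg_zero]
  have hcop : Nat.Coprime (n i) N := Nat.Coprime.prod_right fun j hj =>
    hn hi (Finset.mem_of_mem_erase hj) (Finset.ne_of_mem_erase hj).symm
  exact hgi (AddMonoid.addOrderOf_eq_one_iff.1 (Nat.eq_one_of_dvd_coprimes hcop
    (addOrderOf_dvd_of_nsmul_eq_zero (hg i hi)) (addOrderOf_dvd_of_nsmul_eq_zero hNg)))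

lemma ZMod.exists_norm_toAddCircle_sub_le (N : ℕ) [NeZero N] (x : UnitAddCircle) :
    ∃ c : ZMod N, ‖toAddCircle c - x‖ ≤ (2 * (N : ℝ))⁻¹ := by
  obtain ⟨t, rfl⟩ := QuotientAddGroup.mk_surjective x
  have hN : (0 : ℝ) < N := Nat.cast_pos.2 (NeZero.pos N)
  refine ⟨round ((N : ℝ) * t), ?_⟩
  rw [toAddCircle_intCast, ← AddCircle.coe_sub]
  refine QuotientAddGroup.norm_mk_le_norm.trans ?_
  rw [Real.norm_eq_abs, show (round ((N : ℝ) * t) : ℝ) / N - t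
      = -((N * t - round ((N : ℝ) * t)) / N) by field_simp; ring,
    abs_neg, abs_div, abs_of_pos hN, div_le_iff₀ hN, mul_inv, mul_assoc,
    inv_mul_cancel₀ hN.ne', mul_one]
  exact (abs_sub_round ((N : ℝ) * t)).trans_eq (one_div 2)

lemma coeFn_sum_dyadicIndicatorLp {ι : Type*} (s : Finset ι) (m : ι → ℕ) (k : ι → ℤ)
    (c : ι → UnitAddCircle) :
    ⇑(∑ i ∈ s, dyadicIndicatorLp (m i) (k i) (c i))
      =ᵐ[volume] fun t => ∑ i ∈ s, (dyadicInterval (m i) (k i)).indicator (fun _ => c i) t :=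
  coeFn_sum_indicatorConstLp s (fun i => measurableSet_dyadicInterval (m i) (k i))
    (fun i => by simp [volume_dyadicInterval]) c

lemma sum_indicator_dyadicInterval_eq_zero {ι : Type*} {s : Finset ι} {m : ι → ℕ} {k : ι → ℤ}
    {c : ι → UnitAddCircle} (h : ∑ i ∈ s, dyadicIndicatorLp (m i) (k i) (c i) = 0) (t : ℝ) :
    ∑ i ∈ s, (dyadicInterval (m i) (k i)).indicator (fun _ => c i) t = 0 := by
  set M := s.sup m
  set Q := dyadicInterval M ⌊(2 : ℝ) ^ M * t⌋
  have htQ : t ∈ Q := rfl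
  have hconst : ∀ t' ∈ Q, ∑ i ∈ s, (dyadicInterval (m i) (k i)).indicator (fun _ => c i) t'
      = ∑ i ∈ s, (dyadicInterval (m i) (k i)).indicator (fun _ => c i) t := by
    refine fun t' ht' => Finset.sum_congr rfl fun i hi => ?_
    rcases dyadicInterval_subset_or_disjoint (Finset.le_sup hi) (k i) ⌊(2 : ℝ) ^ M * t⌋ with
      hsub | hdis
    · rw [indicator_of_mem (hsub ht'), indicator_of_mem (hsub htQ)]
    · rw [indicator_of_notMem (hdis.notMem_of_mem_left ht'),
        indicator_of_notMem (hdis.notMem_of_mem_left htQ)]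
  have hzero : ⇑(∑ i ∈ s, dyadicIndicatorLp (m i) (k i) (c i)) =ᵐ[volume] 0 := by
    rw [h]; exact Lp.coeFn_zero _ _ _
  by_contra hne
  have hQ : volume Q = 0 := measure_eq_zero_iff_ae_notMem.2 <| by
    filter_upwards [coeFn_sum_dyadicIndicatorLp s m k c, hzero] with t' h1 h2 ht'
    exact hne ((hconst t' ht').symm.trans (h1.symm.trans h2))
  simp only [Q, volume_dyadicInterval, ENNReal.ofReal_eq_zero, inv_nonpos] at hQ
  exact (pow_pos two_pos M).not_ge hQ

section DyadicEmbedding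

variable (p : ℕ → ℕ) [∀ n, NeZero (p n)]

def dyadicEmbedding : (⨁ n, ZMod (p n)) →+ Lp UnitAddCircle 1 (volume : Measure ℝ) :=
  DirectSum.toAddMonoid fun n =>
    (dyadicIndicatorLp n.unpair.1 n.unpair.2).comp ZMod.toAddCircle

def smallSubgroups (M : ℕ) : Set (AddSubgroup (⨁ n, ZMod (p n))) :=
  (fun n => (DirectSum.of (fun n => ZMod (p n)) n).range) '' {n | M ≤ n.unpair.1}

variable {p}

lemma dyadicEmbedding_of (n : ℕ) (a : ZMod (p n)) :
    dyadicEmbedding p (DirectSum.of _ n a)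
      = dyadicIndicatorLp n.unpair.1 n.unpair.2 (ZMod.toAddCircle a) :=
  DirectSum.toAddMonoid_of _ _ _

lemma dyadicEmbedding_injective (hp : Pairwise (Nat.Coprime on p)) :
    Injective (dyadicEmbedding p) := by
  classical
  refine (injective_iff_map_eq_zero _).2 fun x hx => ?_
  by_contra hne
  obtain ⟨i, hi⟩ : x.support.Nonempty := Finset.nonempty_iff_ne_empty.2
    (DFinsupp.support_eq_empty.not.2 hne)
  rw [← DirectSum.sum_support_of x, map_sum] at hx
  simp only [dyadicEmbedding_of] at hx
  have ht : ((i.unpair.2 : ℝ) / 2 ^ i.unpair.1) ∈ dyadicInterval i.unpair.1 i.unpair.2 := by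
    simp [dyadicInterval, mul_div_cancel₀ _ (pow_ne_zero _ (two_ne_zero' ℝ))]
  have hvanish := sum_indicator_dyadicInterval_eq_zero hx ((i.unpair.2 : ℝ) / 2 ^ i.unpair.1)
  simp only [indicator_apply, ← Finset.sum_filter] at hvanish
  refine sum_ne_zero_of_coprime_nsmul_eq_zero (hp.set_pairwise _) (fun j _ => ?_)
    (Finset.mem_filter.2 ⟨hi, ht⟩) (by simpa using DFinsupp.mem_support_iff.1 hi) hvanish
  rw [← map_nsmul, nsmul_eq_mul, ZMod.natCast_self, zero_mul, map_zero]

lemma norm_dyadicEmbedding_le_of_mem_smallSubgroups {M : ℕ} {H : AddSubgroup (⨁ n, ZMod (p n))}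
    (hH : H ∈ smallSubgroups p M) {x : ⨁ n, ZMod (p n)} (hx : x ∈ H) :
    ‖dyadicEmbedding p x‖ ≤ (2 ^ M)⁻¹ := by
  obtain ⟨n, hn, rfl⟩ := hH
  obtain ⟨a, rfl⟩ := hx
  rw [dyadicEmbedding_of, norm_dyadicIndicatorLp]
  calc _ ≤ (1 : ℝ) * (2 ^ n.unpair.1)⁻¹ := by
        gcongr
        exact (AddCircle.norm_le_half_period _ one_ne_zero).trans (by norm_num)
    _ ≤ (2 ^ M)⁻¹ := by
        rw [one_mul]
        gcongr
        · norm_num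
        · exact hn

lemma exists_mem_closure_smallSubgroups_norm_sub_lt (hp : Tendsto p atTop atTop) (M i : ℕ)
    (a : ZMod (p i)) {δ : ℝ} (hδ : 0 < δ) :
    ∃ y ∈ AddSubgroup.closure (⋃ H ∈ smallSubgroups p M, (H : Set (⨁ n, ZMod (p n)))),
      ‖dyadicEmbedding p y - dyadicEmbedding p (DirectSum.of _ i a)‖ < δ := by
  obtain ⟨N, hN⟩ := eventually_atTop.1 <| ((tendsto_natCast_atTop_atTop.comp hp).const_mul_atTop
    two_pos).inv_tendsto_atTop.eventually (gt_mem_nhds hδ)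
  set m := i.unpair.1
  obtain ⟨d, hMd, hNd⟩ : ∃ d, M ≤ m + d ∧ N ≤ m + d := ⟨M + N, by omega, by omega⟩
  set n : ℕ → ℕ := fun r => Nat.pair (m + d) (2 ^ d * i.unpair.2 + r)
  have hn : ∀ r, (n r).unpair = (m + d, 2 ^ d * i.unpair.2 + r) := fun r => Nat.unpair_pair _ _
  choose c hc using fun n => ZMod.exists_norm_toAddCircle_sub_le (p n) (ZMod.toAddCircle a)
  refine ⟨∑ r ∈ Finset.range (2 ^ d), DirectSum.of _ (n r) (c (n r)),
    AddSubgroup.sum_mem _ fun r _ => AddSubgroup.subset_closure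
      (mem_biUnion ⟨n r, by simpa [hn] using hMd, rfl⟩ ⟨c (n r), rfl⟩), ?_⟩
  have hterm : ∀ r, dyadicEmbedding p (DirectSum.of _ (n r) (c (n r)))
      - dyadicIndicatorLp (m + d) (2 ^ d * i.unpair.2 + r) (ZMod.toAddCircle a)
      = dyadicIndicatorLp (m + d) (2 ^ d * i.unpair.2 + r)
          (ZMod.toAddCircle (c (n r)) - ZMod.toAddCircle a) := by
    intro r
    rw [dyadicEmbedding_of, hn, map_sub]
    push_cast; rfl
  rw [map_sum, dyadicEmbedding_of, dyadicIndicatorLp_eq_sum m d, ← Finset.sum_sub_distrib]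
  calc _ ≤ ∑ r ∈ Finset.range (2 ^ d), ‖dyadicEmbedding p (DirectSum.of _ (n r) (c (n r)))
          - dyadicIndicatorLp (m + d) (2 ^ d * i.unpair.2 + r) (ZMod.toAddCircle a)‖ :=
        norm_sum_le _ _
    _ < ∑ r ∈ Finset.range (2 ^ d), δ * (2 ^ (m + d))⁻¹ := by
        refine Finset.sum_lt_sum_of_nonempty ⟨0, by simp⟩ fun r _ => ?_
        rw [hterm, norm_dyadicIndicatorLp]
        refine mul_lt_mul_of_pos_right ((hc _).trans_lt (hN _ ?_)) (by positivity)
        exact hNd.trans (Nat.left_le_pair _ _)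
    _ = δ * (2 ^ m)⁻¹ := by
        rw [Finset.sum_const, Finset.card_range, nsmul_eq_mul, pow_add]; push_cast; field_simp
    _ ≤ δ := mul_le_of_le_one_right hδ.le (inv_le_one_of_one_le₀ (one_le_pow₀ one_le_two))

end DyadicEmbedding

lemma addHasSSGP_of_subset_closure {G : Type*} [AddGroup G] [TopologicalSpace G]
    [IsTopologicalAddGroup G] {S : Set G} (hS : AddSubmonoid.closure S = ⊤)
    (h : ∀ U ∈ 𝓝 (0 : G), ∃ 𝓗 : Set (AddSubgroup G), (∀ H ∈ 𝓗, (H : Set G) ⊆ U) ∧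
      S ⊆ closure (AddSubgroup.closure (⋃ H ∈ 𝓗, (H : Set G)))) :
    AddHasSSGP G := by
  intro U hU
  obtain ⟨𝓗, hsmall, hS𝓗⟩ := h U hU
  refine ⟨𝓗, hsmall, fun x => ?_⟩
  rw [← AddSubgroup.topologicalClosure_coe] at hS𝓗 ⊢
  exact (AddSubmonoid.closure_le (S := AddSubgroup.toAddSubmonoid _)).2 hS𝓗
    (hS ▸ AddSubmonoid.mem_top x)

end

/-- For a strictly increasing sequence of primes `p i`, the direct sum
`⊕_{i<ω} ℤ/p_iℤ` admits an SSGP topology. -/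
theorem exists_ssgp_topology_directSum_zmod (p : ℕ → ℕ) (hp : ∀ i, Nat.Prime (p i))
    (hmono : StrictMono p) :
    ∃ t : TopologicalSpace (⨁ i, ZMod (p i)),
      haveI := t
      ∃ tg : IsTopologicalAddGroup (⨁ i, ZMod (p i)),
        haveI := tg
        T2Space (⨁ i, ZMod (p i)) ∧ AddHasSSGP (⨁ i, ZMod (p i)) := by
  have : ∀ n, NeZero (p n) := fun n => ⟨(hp n).ne_zero⟩
  have hcop : Pairwise (Nat.Coprime on p) := fun i j hij =>
    (Nat.coprime_primes (hp i) (hp j)).2 (hmono.injective.ne hij)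
  let : NormedAddCommGroup (⨁ i, ZMod (p i)) :=
    NormedAddCommGroup.induced _ _ (dyadicEmbedding p) (dyadicEmbedding_injective hcop)
  refine ⟨inferInstance, inferInstance, inferInstance,
    addHasSSGP_of_subset_closure DFinsupp.add_closure_iUnion_range_single fun U hU => ?_⟩
  obtain ⟨ε, hε, hball⟩ := Metric.mem_nhds_iff.1 hU
  obtain ⟨M, hM⟩ := exists_pow_lt_of_lt_one hε (by norm_num : (2 : ℝ)⁻¹ < 1)
  rw [inv_pow] at hM
  refine ⟨smallSubgroups p M, ?_, ?_⟩
  · exact fun H hH x hx => hball <| mem_ball_zero_iff.2 <|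
      (norm_dyadicEmbedding_le_of_mem_smallSubgroups hH hx).trans_lt hM
  · rintro _ ⟨_, ⟨i, rfl⟩, a, rfl⟩
    refine Metric.mem_closure_iff.2 fun δ hδ => ?_
    obtain ⟨y, hy, hyδ⟩ :=
      exists_mem_closure_smallSubgroups_norm_sub_lt hmono.tendsto_atTop M i a hδ
    refine ⟨y, hy, ?_⟩
    rw [dist_comm, dist_eq_norm]
    rwa [← map_sub] at hyδ
end

section
/- Let G be an abelian group with |G| > 1 and let I be an infinite index set. Then the direct sum ⊕_{i ∈ I} G (the group of finitely supported functions from I to G under pointwise addition) admits an SSGP topology; that is, there is a Hausdorff group topology 𝒯 on ⊕_{i ∈ I} G such that it has the small subgroup generating property (SSGP). -/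
universe u v

/-!
This is the Hartman–Mycielski construction. Let `c : T → [0, 1)` be injective with dense range
(for countable `T`, a bijection onto the rationals of `[0, 1)`). Read `x : T →₀ H` as the step
function `s ↦ ∑_{c i ≤ s} x i` on `[0, 1)`; the Lebesgue measure of its support is a group norm,
positive on `x ≠ 0` because at `s` just above the least `c i` on the support the sum is that single
`x i`. The subgroup `{single i g - single j g | g}` lies in the ball of radius `|c i - c j|`, and as
`c` has dense range, chains of indices with close values of `c` show that these small subgroups
generate every `x - single j (∑ x)`. Such an element is within `1 - c j` of `x`, so they are dense.
An infinite `I` satisfies `ℕ × I ≃ I`, whence `I →₀ G ≃+ ℕ →₀ (I →₀ G)`.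
-/

open Set Function MeasureTheory Finsupp Topology

theorem AddHasSSGP.of_surjective {A B : Type*} [AddGroup A] [TopologicalSpace A] [AddGroup B]
    [TopologicalSpace B] (hA : AddHasSSGP A) (f : A →+ B) (hf : Continuous f)
    (hsurj : Surjective f) : AddHasSSGP B := by
  intro U hU
  obtain ⟨𝓗, hsmall, hdense⟩ :=
    hA (f ⁻¹' U) (hf.continuousAt.preimage_mem_nhds (by rwa [map_zero]))
  refine ⟨AddSubgroup.map f '' 𝓗, ?_, ?_⟩
  · rintro _ ⟨H, hH, rfl⟩
    exact image_subset_iff.2 (hsmall H hH)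
  · have himage : f '' ⋃ H ∈ 𝓗, (H : Set A) = ⋃ K ∈ AddSubgroup.map f '' 𝓗, (K : Set B) := by
      simp [image_iUnion₂]
    rw [← himage, ← AddMonoidHom.map_closure, AddSubgroup.coe_map]
    exact hsurj.denseRange.dense_image hf hdense

def AdmitsSSGPTopology (A : Type*) [AddGroup A] : Prop :=
  ∃ t : TopologicalSpace A, ∃ _ : @IsTopologicalAddGroup A t _,
    @T2Space A t ∧ @AddHasSSGP A _ t

theorem AdmitsSSGPTopology.of_addEquiv {A B : Type*} [AddGroup A] [AddGroup B] (e : A ≃+ B)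
    (hA : AdmitsSSGPTopology A) : AdmitsSSGPTopology B := by
  obtain ⟨tA, _, _, hssgp⟩ := hA
  let _ : TopologicalSpace B := tA.induced e.symm
  have he : Continuous e := continuous_induced_rng.2 (by simpa using continuous_id)
  have hsymm : Topology.IsEmbedding e.symm := ⟨⟨rfl⟩, e.symm.injective⟩
  exact ⟨_, topologicalAddGroup_induced e.symm, hsymm.t2Space,
    hssgp.of_surjective e.toAddMonoidHom he e.surjective⟩

theorem Finsupp.sub_single_sum_mem {T H : Type*} [AddCommGroup H] {S : AddSubgroup (T →₀ H)}
    (hS : ∀ i j (g : H), single i g - single j g ∈ S) (x : T →₀ H) (j : T) :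
    x - single j (x.sum fun _ g => g) ∈ S := by
  have hx : x - single j (x.sum fun _ g => g) = x.sum fun i g => single i g - single j g := by
    rw [Finsupp.sum_sub, sum_single, Finsupp.sum, Finsupp.sum, single_finsetSum]
  rw [hx]
  exact sum_mem fun i _ => hS _ _ _

namespace StepFunction

variable {T H : Type*} [AddCommGroup H] (c : T → ℝ)

noncomputable def partialSum (s : ℝ) : (T →₀ H) →+ H :=
  liftAddHom fun i => if c i ≤ s then AddMonoidHom.id H else 0

theorem partialSum_apply (s : ℝ) (x : T →₀ H) :
    partialSum c s x = x.sum fun i g => if c i ≤ s then g else 0 := by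
  rw [partialSum, liftAddHom_apply]
  exact sum_congr fun i _ => by split_ifs <;> rfl

theorem partialSum_single (s : ℝ) (i : T) (g : H) :
    partialSum c s (single i g) = if c i ≤ s then g else 0 := by
  rw [partialSum_apply, sum_single_index (by simp)]

def stepSupport (x : T →₀ H) : Set ℝ :=
  {s ∈ Ico 0 1 | partialSum c s x ≠ 0}

theorem stepSupport_subset (x : T →₀ H) : stepSupport c x ⊆ Ico 0 1 := sep_subset _ _

theorem volume_stepSupport_ne_top (x : T →₀ H) : volume (stepSupport c x) ≠ ⊤ :=
  ((measure_mono (stepSupport_subset c x)).trans_lt measure_Ico_lt_top).ne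

theorem stepSupport_add_subset (x y : T →₀ H) :
    stepSupport c (x + y) ⊆ stepSupport c x ∪ stepSupport c y := by
  rintro s ⟨hs, hxy⟩
  by_contra! h
  simp_all [stepSupport]

noncomputable def stepSeminorm : AddGroupSeminorm (T →₀ H) where
  toFun x := volume.real (stepSupport c x)
  map_zero' := by simp [stepSupport]
  add_le' x y :=
    (measureReal_mono (stepSupport_add_subset c x y)
      (measure_union_ne_top (volume_stepSupport_ne_top c x) (volume_stepSupport_ne_top c y))).trans
      (measureReal_union_le _ _)
  neg' x := by simp [stepSupport]

theorem stepSeminorm_apply (x : T →₀ H) :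
    stepSeminorm c x = volume.real (stepSupport c x) := rfl

theorem stepSeminorm_le_of_subset {x : T →₀ H} {a b : ℝ} (h : stepSupport c x ⊆ Ico a b)
    (hab : a ≤ b) : stepSeminorm c x ≤ b - a := by
  rw [stepSeminorm_apply, ← Real.volume_real_Ico_of_le hab]
  exact measureReal_mono h measure_Ico_lt_top.ne

theorem stepSeminorm_single_sub_single_le (i j : T) (g : H) :
    stepSeminorm c (single i g - single j g) ≤ |c i - c j| := by
  have hsub : stepSupport c (single i g - single j g) ⊆ Ico (min (c i) (c j)) (max (c i) (c j)) := by
    rintro s ⟨-, hs⟩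
    rw [map_sub, partialSum_single, partialSum_single] at hs
    split_ifs at hs with hi hj hj
    · simp at hs
    · exact ⟨min_le_left _ _ |>.trans hi, lt_max_of_lt_right (not_le.1 hj)⟩
    · exact ⟨min_le_right _ _ |>.trans hj, lt_max_of_lt_left (not_le.1 hi)⟩
    · simp at hs
  simpa [max_sub_min_eq_abs'] using stepSeminorm_le_of_subset c hsub min_le_max

theorem stepSeminorm_single_le {j : T} (hj : c j ≤ 1) (g : H) :
    stepSeminorm c (single j g) ≤ 1 - c j := by
  refine stepSeminorm_le_of_subset c (fun s ⟨hs, hne⟩ => ⟨?_, hs.2⟩) hj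
  rw [partialSum_single] at hne
  by_contra h
  exact hne (if_neg h)

theorem stepSeminorm_pos (hinj : Injective c) (hc : ∀ t, c t ∈ Ico 0 1) {x : T →₀ H}
    (hx : x ≠ 0) : 0 < stepSeminorm c x := by
  obtain ⟨f, hf, hmin⟩ := x.support.exists_min_image c (support_nonempty_iff.2 hx)
  have hnear : ∀ᶠ s in 𝓝 (c f), s < 1 ∧ ∀ t ∈ x.support, t ≠ f → s < c t :=
    (eventually_lt_nhds (hc f).2).and <| (Finset.eventually_all _).2 fun t ht => by
      rcases eq_or_ne t f with rfl | htf
      · exact .of_forall fun _ h => absurd rfl h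
      · exact (eventually_lt_nhds ((hmin t ht).lt_of_ne (hinj.ne htf.symm))).mono fun _ hs _ => hs
  obtain ⟨b, hfb, hb⟩ := mem_nhdsGE_iff_exists_Ico_subset.1 (mem_nhdsWithin_of_mem_nhds hnear)
  have hsub : Ico (c f) b ⊆ stepSupport c x := by
    intro s hs
    obtain ⟨hs1, hsep⟩ := hb hs
    refine ⟨⟨(hc f).1.trans hs.1, hs1⟩, ?_⟩
    rw [partialSum_apply, Finsupp.sum, Finset.sum_eq_single f, if_pos hs.1]
    · exact mem_support_iff.1 hf
    · exact fun t ht htf => if_neg (not_le.2 (hsep t ht htf))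
    · exact fun h => absurd hf h
  calc 0 < b - c f := sub_pos.2 hfb
    _ = volume.real (Ico (c f) b) := (Real.volume_real_Ico_of_le hfb.le).symm
    _ ≤ stepSeminorm c x := measureReal_mono hsub (volume_stepSupport_ne_top c x)

noncomputable def stepNorm (hinj : Injective c) (hc : ∀ t, c t ∈ Ico 0 1) :
    AddGroupNorm (T →₀ H) :=
  { stepSeminorm c with
    eq_zero_of_map_eq_zero' := fun _ hx => by_contra fun h => (stepSeminorm_pos c hinj hc h).ne' hx }

theorem single_sub_single_mem (hc : ∀ t, c t ∈ Icc 0 1)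
    (hdense : ∀ a b, 0 ≤ a → a < b → b ≤ 1 → ∃ t, c t ∈ Ioo a b) {ε : ℝ} (hε : 0 < ε)
    {S : AddSubgroup (T →₀ H)} (hS : ∀ i j g, |c i - c j| < ε → single i g - single j g ∈ S)
    (i j : T) (g : H) : single i g - single j g ∈ S := by
  suffices key : ∀ n : ℕ, ∀ i j, c i ≤ c j → c j - c i < n * (ε / 2) →
      single i g - single j g ∈ S by
    rcases le_total (c i) (c j) with h | h
    · obtain ⟨n, hn⟩ := exists_nat_gt ((c j - c i) / (ε / 2))
      exact key n i j h (by rwa [div_lt_iff₀ (by positivity)] at hn)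
    · obtain ⟨n, hn⟩ := exists_nat_gt ((c i - c j) / (ε / 2))
      rw [← neg_sub]
      exact neg_mem (key n j i h (by rwa [div_lt_iff₀ (by positivity)] at hn))
  intro n
  induction n with
  | zero => intro i j hij hn; simp at hn; linarith
  | succ n ih =>
    intro i j hij hn
    by_cases hclose : c j - c i < ε
    · exact hS i j g (by rwa [abs_sub_comm, abs_of_nonneg (sub_nonneg.2 hij)])
    obtain ⟨t, ht₁, ht₂⟩ := hdense (c i + ε / 2) (c i + ε) (by linarith [(hc i).1])
      (by linarith) (by linarith [(hc j).2])
    have hit : single i g - single t g ∈ S := hS i t g (by rw [abs_lt]; constructor <;> linarith)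
    have htj : single t g - single j g ∈ S := ih t j (by linarith) (by push_cast at hn; linarith)
    simpa using add_mem hit htj

theorem admitsSSGPTopology (hinj : Injective c) (hc : ∀ t, c t ∈ Ico 0 1)
    (hdense : ∀ a b, 0 ≤ a → a < b → b ≤ 1 → ∃ t, c t ∈ Ioo a b) :
    AdmitsSSGPTopology (T →₀ H) := by
  let _ := (stepNorm (H := H) c hinj hc).toNormedAddCommGroup
  refine ⟨inferInstance, inferInstance, inferInstance, fun U hU => ?_⟩
  obtain ⟨ε, hε, hball⟩ := Metric.mem_nhds_iff.1 hU
  let 𝓗 : Set (AddSubgroup (T →₀ H)) :=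
    {K | ∃ i j, |c i - c j| < ε ∧ K = (singleAddHom i - singleAddHom j : H →+ T →₀ H).range}
  refine ⟨𝓗, ?_, ?_⟩
  · rintro _ ⟨i, j, hij, rfl⟩ _ ⟨g, rfl⟩
    apply hball
    rw [mem_ball_zero_iff]
    exact (stepSeminorm_single_sub_single_le c i j g).trans_lt hij
  have hS : ∀ i j (g : H), |c i - c j| < ε →
      single i g - single j g ∈ AddSubgroup.closure (⋃ K ∈ 𝓗, (K : Set (T →₀ H))) :=
    fun i j g hij => AddSubgroup.subset_closure <| mem_biUnion ⟨i, j, hij, rfl⟩ ⟨g, rfl⟩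
  have hpair := single_sub_single_mem c (fun t => Ico_subset_Icc_self (hc t)) hdense hε hS
  refine Metric.dense_iff.2 fun x δ hδ => ?_
  obtain ⟨j, hj, -⟩ :=
    hdense (max (1 - δ) 0) 1 (le_max_right _ _) (max_lt (by linarith) one_pos) le_rfl
  refine ⟨x - single j (x.sum fun _ g => g), ?_, sub_single_sum_mem hpair x j⟩
  rw [Metric.mem_ball, dist_eq_norm, sub_sub_cancel_left, norm_neg]
  calc stepSeminorm c (single j (x.sum fun _ g => g)) ≤ 1 - c j :=
        stepSeminorm_single_le c (hc j).2.le _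
    _ < δ := by linarith [le_max_left (1 - δ) 0]

end StepFunction

theorem admitsSSGPTopology_finsupp_of_countable (T : Type*) [Countable T] [Infinite T]
    (H : Type*) [AddCommGroup H] : AdmitsSSGPTopology (T →₀ H) := by
  have : Infinite (Ico (0 : ℚ) 1) := (Ico_infinite zero_lt_one).to_subtype
  obtain ⟨e⟩ := nonempty_equiv_of_countable (α := Ico (0 : ℚ) 1) (β := T)
  refine (StepFunction.admitsSSGPTopology (fun q : Ico (0 : ℚ) 1 => (q : ℝ)) ?_ ?_ ?_).of_addEquiv
    (Finsupp.domCongr e)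
  · exact Rat.cast_injective.comp Subtype.val_injective
  · exact fun q => ⟨mod_cast q.2.1, mod_cast q.2.2⟩
  · intro a b ha hab hb
    obtain ⟨q, haq, hqb⟩ := exists_rat_btwn hab
    exact ⟨⟨q, mod_cast ha.trans haq.le, mod_cast hqb.trans_le hb⟩, haq, hqb⟩

noncomputable def Infinite.natProdEquiv (I : Type*) [Infinite I] : ℕ × I ≃ I := by
  have hI : Cardinal.aleph0 ≤ Cardinal.mk I := Cardinal.infinite_iff.1 inferInstance
  have h1 : Cardinal.mk (ℕ × I) = Cardinal.mk I := by
    rw [Cardinal.mk_prod, Cardinal.mk_nat, Cardinal.lift_aleph0, Cardinal.lift_uzero]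
    exact Cardinal.mul_eq_right hI hI Cardinal.aleph0_ne_zero
  exact Classical.choice (Cardinal.eq.1 h1)

theorem exists_ssgp_topology_directSum_general (G : Type u) [AddCommGroup G]
    (I : Type v) [Infinite I] :
    ∃ t : TopologicalSpace (I →₀ G),
      haveI := t
      ∃ tg : IsTopologicalAddGroup (I →₀ G),
        haveI := tg
        T2Space (I →₀ G) ∧ AddHasSSGP (I →₀ G) :=
  (admitsSSGPTopology_finsupp_of_countable ℕ (I →₀ G)).of_addEquiv
    (curryAddEquiv.symm.trans (Finsupp.domCongr (Infinite.natProdEquiv I)))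

/-- For a nontrivial abelian group `G` and an infinite index set `I`, the
direct sum `⊕_{i ∈ I} G` (finitely supported functions from `I` to `G`) admits
an SSGP topology. -/
theorem exists_ssgp_topology_directSum (G : Type u) [AddCommGroup G] [Nontrivial G]
    (I : Type v) [Infinite I] :
    ∃ t : TopologicalSpace (I →₀ G),
      haveI := t
      ∃ tg : IsTopologicalAddGroup (I →₀ G),
        haveI := tg
        T2Space (I →₀ G) ∧ AddHasSSGP (I →₀ G) :=
  exists_ssgp_topology_directSum_general G I
end
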